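/- arXiv:2108.07754 — 6 statements merged into one kernel-verified Lean document; each statement's English description precedes it below -/
import Mathlib

section
/- Let f_1, ..., f_n : D → ℝ be continuous on an open set D ⊆ ℝ, each differentiable at a point x ∈ D with continuous derivative at x (i.e., C¹ at x). If x is a local maximizer of f_max(t) = max_j f_j(t), then f_max is differentiable at x and f_max'(x) = 0. -/
/-- if each `f j` is C¹ at a local maximizer `x` of the max
function, then the max function is differentiable at `x` with derivative 0. -/
theorem stmt_2 {n : ℕ} (hn : 0 < n) (D : Set ℝ) (hD : IsOpen D)
    (f : Fin n → ℝ → ℝ) (hf : ∀ j, ContinuousOn (f j) D)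
    (fmax : ℝ → ℝ)
    (hfmax : ∀ t, fmax t =
      Finset.univ.sup' (Finset.univ_nonempty_iff.mpr ⟨⟨0, hn⟩⟩) (fun j => f j t))
    (x : ℝ) (hx : x ∈ D) (hC1 : ∀ j, ContDiffAt ℝ 1 (f j) x)
    (hmax : IsLocalMax fmax x) :
    HasDerivAt fmax 0 x := by
  obtain ⟨j0, -, hj0⟩ := Finset.exists_mem_eq_sup'
    (Finset.univ_nonempty_iff.mpr ⟨⟨0, hn⟩⟩) (fun j => f j x)
  have hx0 : fmax x = f j0 x := by rw [hfmax x]; exact hj0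
  have hle : ∀ t, f j0 t ≤ fmax t := fun t => by
    rw [hfmax t]; exact Finset.le_sup' (fun j => f j t) (Finset.mem_univ j0)
  have hlm : IsLocalMax (f j0) x := by
    filter_upwards [hmax] with t ht
    calc f j0 t ≤ fmax t := hle t
    _ ≤ fmax x := ht
    _ = f j0 x := hx0
  have hd : HasDerivAt (f j0) 0 x := by
    have hdiff := (hC1 j0).differentiableAt one_ne_zero
    rw [← hlm.deriv_eq_zero]
    exact hdiff.hasDerivAt
  rw [hasDerivAt_iff_isLittleO] at hd ⊢
  simp only [smul_zero, sub_zero] at hd ⊢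
  refine (Asymptotics.IsBigO.trans_isLittleO ?_ hd)
  refine Asymptotics.IsBigO.of_bound 1 ?_
  filter_upwards [hmax] with t ht
  rw [one_mul, Real.norm_eq_abs, Real.norm_eq_abs]
  have h1 : f j0 t - f j0 x ≤ fmax t - fmax x := by
    have := hle t; linarith
  have h2 : fmax t - fmax x ≤ 0 := sub_nonpos.mpr ht
  rw [abs_of_nonpos h2, abs_of_nonpos (h1.trans h2)]
  linarith
end

section
/- Let x be a local maximizer of f_max = max(f_1, ..., f_n), and suppose there exist indices j₁, j₂ (possibly equal) and δ > 0 such that f_max(x − ε) = f_{j₁}(x − ε) and f_max(x + ε) = f_{j₂}(x + ε) for all 0 < ε < δ, where f_{j₁} and f_{j₂} are C³ near x. Then f_max is twice continuously differentiable near x, with second derivative Lipschitz continuous near x. -/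
open Set Filter Topology
open scoped NNReal

/-!
Write `h = f j₁ - f j₂`. Near `x` the maximum equals `f j₁` on the left and `f j₂` on the right,
so `h ≥ 0` to the left of `x` and `h ≤ 0` to the right; continuity gives `h x = 0`. The local
maximum forces `f j₁' x ≥ 0 ≥ f j₂' x`, while the sign change of `h` forces `h' x ≤ 0`, hence
`h' x = 0`. By the mean value theorem `h'` takes non-positive values arbitrarily close to `x` on
both sides, which squeezes `h'' x` to `0`. So the two pieces agree to second order at `x`, and
the glued function is `C²` with second derivative glued from two `C¹`, hence locally Lipschitz,
functions.
-/

section OneSided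

variable {g : ℝ → ℝ} {g' x : ℝ}

theorem HasDerivAt.nonneg_of_frequently_le_left (hg : HasDerivAt g g' x)
    (h : ∃ᶠ t in 𝓝[<] x, g t ≤ g x) : 0 ≤ g' := by
  refine isClosed_Ici.mem_of_frequently_of_tendsto ?_
    ((hasDerivAt_iff_tendsto_slope.1 hg).mono_left (nhdsLT_le_nhdsNE x))
  refine (h.and_eventually self_mem_nhdsWithin).mono fun t ⟨hle, hlt⟩ => ?_
  rw [mem_Ici, slope_def_field]
  exact div_nonneg_of_nonpos (by linarith) (by linarith)

theorem HasDerivAt.nonpos_of_frequently_le_right (hg : HasDerivAt g g' x)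
    (h : ∃ᶠ t in 𝓝[>] x, g t ≤ g x) : g' ≤ 0 := by
  refine isClosed_Iic.mem_of_frequently_of_tendsto ?_
    ((hasDerivAt_iff_tendsto_slope.1 hg).mono_left (nhdsGT_le_nhdsNE x))
  refine (h.and_eventually self_mem_nhdsWithin).mono fun t ⟨hle, hgt⟩ => ?_
  rw [mem_Iic, slope_def_field]
  exact div_nonpos_of_nonpos_of_nonneg (by linarith) (by linarith)

theorem frequently_deriv_nonpos_nhdsLT (hd : ∀ᶠ t in 𝓝 x, DifferentiableAt ℝ g t)
    (hg : ∀ᶠ t in 𝓝[<] x, g x ≤ g t) : ∃ᶠ t in 𝓝[<] x, deriv g t ≤ 0 := by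
  refine frequently_iff.2 fun {U} hU => ?_
  have hU' : ∀ᶠ t in 𝓝[<] x, t ∈ U ∧ g x ≤ g t ∧ DifferentiableAt ℝ g t :=
    Eventually.and hU (hg.and (nhdsWithin_le_nhds hd))
  obtain ⟨a, hax, ha⟩ := mem_nhdsLT_iff_exists_Ioo_subset.1 hU'
  have hb : (a + x) / 2 < x := by linarith [mem_Iio.1 hax]
  have hdiff : ∀ t ∈ Icc ((a + x) / 2) x, DifferentiableAt ℝ g t := by
    rintro t ⟨hbt, htx⟩
    rcases htx.lt_or_eq with htx | htx
    · exact (ha ⟨by linarith [mem_Iio.1 hax], htx⟩).2.2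
    · exact htx ▸ hd.self_of_nhds
  obtain ⟨c, hc, hslope⟩ := exists_deriv_eq_slope g hb
    (fun t ht => (hdiff t ht).continuousAt.continuousWithinAt)
    (fun t ht => (hdiff t (Ioo_subset_Icc_self ht)).differentiableWithinAt)
  refine ⟨c, (ha ⟨by linarith [hc.1], hc.2⟩).1, ?_⟩
  rw [hslope]
  exact div_nonpos_of_nonpos_of_nonneg
    (by linarith [(ha ⟨by linarith [mem_Iio.1 hax], hb⟩).2.1]) (by linarith)

theorem frequently_deriv_nonpos_nhdsGT (hd : ∀ᶠ t in 𝓝 x, DifferentiableAt ℝ g t)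
    (hg : ∀ᶠ t in 𝓝[>] x, g t ≤ g x) : ∃ᶠ t in 𝓝[>] x, deriv g t ≤ 0 := by
  refine frequently_iff.2 fun {U} hU => ?_
  have hU' : ∀ᶠ t in 𝓝[>] x, t ∈ U ∧ g t ≤ g x ∧ DifferentiableAt ℝ g t :=
    Eventually.and hU (hg.and (nhdsWithin_le_nhds hd))
  obtain ⟨b, hxb, hb⟩ := mem_nhdsGT_iff_exists_Ioo_subset.1 hU'
  have ha : x < (x + b) / 2 := by linarith [mem_Ioi.1 hxb]
  have hdiff : ∀ t ∈ Icc x ((x + b) / 2), DifferentiableAt ℝ g t := by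
    rintro t ⟨hxt, htb⟩
    rcases hxt.lt_or_eq with hxt | hxt
    · exact (hb ⟨hxt, by linarith [mem_Ioi.1 hxb]⟩).2.2
    · exact hxt ▸ hd.self_of_nhds
  obtain ⟨c, hc, hslope⟩ := exists_deriv_eq_slope g ha
    (fun t ht => (hdiff t ht).continuousAt.continuousWithinAt)
    (fun t ht => (hdiff t (Ioo_subset_Icc_self ht)).differentiableWithinAt)
  refine ⟨c, (hb ⟨hc.1, by linarith [hc.2]⟩).1, ?_⟩
  rw [hslope]
  exact div_nonpos_of_nonpos_of_nonneg
    (by linarith [(hb ⟨ha, by linarith [mem_Ioi.1 hxb]⟩).2.1]) (by linarith)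

theorem deriv_deriv_eq_zero_of_crossing (hd : ∀ᶠ t in 𝓝 x, DifferentiableAt ℝ g t)
    (hd2 : DifferentiableAt ℝ (deriv g) x) (h0 : deriv g x = 0)
    (hl : ∀ᶠ t in 𝓝[<] x, g x ≤ g t) (hr : ∀ᶠ t in 𝓝[>] x, g t ≤ g x) :
    deriv (deriv g) x = 0 := by
  refine le_antisymm (hd2.hasDerivAt.nonpos_of_frequently_le_right ?_)
    (hd2.hasDerivAt.nonneg_of_frequently_le_left ?_)
  · simpa only [h0] using frequently_deriv_nonpos_nhdsGT hd hr
  · simpa only [h0] using frequently_deriv_nonpos_nhdsLT hd hl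

end OneSided

theorem ContinuousAt.eq_of_eventuallyEq_nhdsWithin {α β : Type*} [TopologicalSpace α]
    [TopologicalSpace β] [T2Space β] {f g : α → β} {s : Set α} {a : α} [(𝓝[s] a).NeBot]
    (hf : ContinuousAt f a) (hg : ContinuousAt g a) (h : f =ᶠ[𝓝[s] a] g) : f a = g a :=
  tendsto_nhds_unique (hf.tendsto.mono_left nhdsWithin_le_nhds)
    ((hg.tendsto.mono_left nhdsWithin_le_nhds).congr' h.symm)

section Contact

variable {m F₁ F₂ : ℝ → ℝ} {x : ℝ}

theorem deriv_eq_zero_of_isLocalMax_of_eventuallyEq {d₁ d₂ : ℝ} (hmax : IsLocalMax m x)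
    (hF₁ : HasDerivAt F₁ d₁ x) (hF₂ : HasDerivAt F₂ d₂ x)
    (h₁ : m =ᶠ[𝓝[<] x] F₁) (h₂ : m =ᶠ[𝓝[>] x] F₂) (hx₁ : m x = F₁ x) (hx₂ : m x = F₂ x)
    (hle : ∀ᶠ t in 𝓝[>] x, F₁ t ≤ m t) : d₁ = 0 ∧ d₂ = 0 := by
  have hd₁ : 0 ≤ d₁ := hF₁.nonneg_of_frequently_le_left <| Eventually.frequently <| by
    filter_upwards [h₁, nhdsWithin_le_nhds hmax] with t ht hmt
    rw [← ht, ← hx₁]; exact hmt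
  have hd₂ : d₂ ≤ 0 := hF₂.nonpos_of_frequently_le_right <| Eventually.frequently <| by
    filter_upwards [h₂, nhdsWithin_le_nhds hmax] with t ht hmt
    rw [← ht, ← hx₂]; exact hmt
  have hd : d₁ - d₂ ≤ 0 :=
    (hF₁.sub hF₂).nonpos_of_frequently_le_right <| Eventually.frequently <| by
    filter_upwards [h₂, hle] with t ht hlt
    simp only [Pi.sub_apply]
    linarith
  constructor <;> linarith

theorem deriv_deriv_eq_of_crossing (hF₁ : ContDiffAt ℝ 2 F₁ x) (hF₂ : ContDiffAt ℝ 2 F₂ x)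
    (h0 : F₁ x = F₂ x) (h1 : deriv F₁ x = deriv F₂ x)
    (hl : ∀ᶠ t in 𝓝[<] x, F₂ t ≤ F₁ t) (hr : ∀ᶠ t in 𝓝[>] x, F₁ t ≤ F₂ t) :
    deriv (deriv F₁) x = deriv (deriv F₂) x := by
  have hdiff : ∀ᶠ t in 𝓝 x, DifferentiableAt ℝ F₁ t ∧ DifferentiableAt ℝ F₂ t :=
    ((hF₁.eventually (by simp)).and (hF₂.eventually (by simp))).mono fun t ht =>
      ⟨ht.1.differentiableAt (by simp), ht.2.differentiableAt (by simp)⟩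
  have hderiv : deriv (F₁ - F₂) =ᶠ[𝓝 x] deriv F₁ - deriv F₂ :=
    hdiff.mono fun t ht => deriv_sub ht.1 ht.2
  have hdd₁ : DifferentiableAt ℝ (deriv F₁) x :=
    (hF₁.derivWithin (m := 1) le_rfl).differentiableAt one_ne_zero
  have hdd₂ : DifferentiableAt ℝ (deriv F₂) x :=
    (hF₂.derivWithin (m := 1) le_rfl).differentiableAt one_ne_zero
  have key := deriv_deriv_eq_zero_of_crossing (g := F₁ - F₂)
    (hdiff.mono fun t ht => ht.1.sub ht.2)
    ((hdd₁.sub hdd₂).congr_of_eventuallyEq hderiv)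
    (by rw [hderiv.eq_of_nhds, Pi.sub_apply, h1, sub_self])
    (by filter_upwards [hl] with t ht; simp only [Pi.sub_apply]; linarith)
    (by filter_upwards [hr] with t ht; simp only [Pi.sub_apply]; linarith)
  rw [hderiv.deriv_eq, deriv_sub hdd₁ hdd₂] at key
  linarith

end Contact

section Gluing

variable {u v u' v' : ℝ → ℝ} {x : ℝ}

theorem eventuallyEq_ite_le {m : ℝ → ℝ} (hu : m =ᶠ[𝓝[<] x] u) (hv : m =ᶠ[𝓝[>] x] v)
    (hx : m x = u x) : m =ᶠ[𝓝 x] fun t => if t ≤ x then u t else v t := by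
  refine eventuallyEq_nhds_of_eventuallyEq_nhdsNE ?_ (by simp [hx])
  rw [← nhdsLT_sup_nhdsGT, EventuallyEq, eventually_sup]
  constructor
  · filter_upwards [hu, self_mem_nhdsWithin] with t ht htx
    rw [ht, if_pos (le_of_lt htx)]
  · filter_upwards [hv, self_mem_nhdsWithin] with t ht htx
    rw [ht, if_neg (not_le.2 htx)]

theorem hasDerivAt_ite_le {t : ℝ} (hx : u x = v x) (hx' : u' x = v' x)
    (hu : HasDerivAt u (u' t) t) (hv : HasDerivAt v (v' t) t) :
    HasDerivAt (fun s => if s ≤ x then u s else v s) (if t ≤ x then u' t else v' t) t := by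
  rcases lt_trichotomy t x with htx | rfl | hxt
  · rw [if_pos htx.le]
    exact hu.congr_of_eventuallyEq <| by
      filter_upwards [Iio_mem_nhds htx] with s hs
      exact if_pos (le_of_lt hs)
  · rw [if_pos le_rfl, ← hasDerivWithinAt_univ, ← Iic_union_Ici]
    refine HasDerivWithinAt.union ?_ ?_
    · exact hu.hasDerivWithinAt.congr (fun s hs => if_pos hs) (if_pos le_rfl)
    · rw [hx']
      refine hv.hasDerivWithinAt.congr (fun s hs => ?_) (by rw [if_pos le_rfl, hx])
      rcases (mem_Ici.1 hs).lt_or_eq with hts | rfl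
      · exact if_neg (not_le.2 hts)
      · rw [if_pos le_rfl, hx]
  · rw [if_neg (not_le.2 hxt)]
    exact hv.congr_of_eventuallyEq <| by
      filter_upwards [Ioi_mem_nhds hxt] with s hs
      exact if_neg (not_le.2 hs)

theorem LipschitzOnWith.ite_le {s : Set ℝ} {K : ℝ≥0} (hu : LipschitzOnWith K u s)
    (hv : LipschitzOnWith K v s) (hxs : x ∈ s) (hx : u x = v x) :
    LipschitzOnWith K (fun t => if t ≤ x then u t else v t) s := by
  have across : ∀ p ∈ s, ∀ q ∈ s, p ≤ x → x < q → dist (u p) (v q) ≤ K * dist p q := by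
    intro p hp q hq hpx hxq
    calc dist (u p) (v q) ≤ dist (u p) (u x) + dist (v x) (v q) := by
          rw [hx]; exact dist_triangle _ _ _
      _ ≤ K * dist p x + K * dist x q :=
          add_le_add (hu.dist_le_mul p hp x hxs) (hv.dist_le_mul x hxs q hq)
      _ = K * dist p q := by
          rw [Real.dist_eq, Real.dist_eq, Real.dist_eq, abs_of_nonpos (by linarith),
            abs_of_nonpos (by linarith), abs_of_nonpos (by linarith)]
          ring
  refine LipschitzOnWith.of_dist_le_mul fun p hp q hq => ?_
  by_cases hpx : p ≤ x <;> by_cases hqx : q ≤ x <;> simp only [hpx, hqx, if_true, if_false]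
  · exact hu.dist_le_mul p hp q hq
  · exact across p hp q hq hpx (not_le.1 hqx)
  · rw [dist_comm, dist_comm p]; exact across q hq p hp hqx (not_le.1 hpx)
  · exact hv.dist_le_mul p hp q hq

end Gluing

section SecondDerivative

variable {m m' m'' : ℝ → ℝ} {U : Set ℝ}

theorem contDiffOn_succ_of_hasDerivAt {n : ℕ} (hU : IsOpen U)
    (hm : ∀ t ∈ U, HasDerivAt m (m' t) t) (hm' : ContDiffOn ℝ n m' U) :
    ContDiffOn ℝ (n + 1) m U := by
  rw [contDiffOn_succ_iff_deriv_of_isOpen hU]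
  exact ⟨fun t ht => (hm t ht).differentiableAt.differentiableWithinAt,
    fun h => absurd h (by simp), hm'.congr fun t ht => (hm t ht).deriv⟩

theorem contDiffOn_two_of_hasDerivAt (hU : IsOpen U) (hm : ∀ t ∈ U, HasDerivAt m (m' t) t)
    (hm' : ∀ t ∈ U, HasDerivAt m' (m'' t) t) (hm'' : ContinuousOn m'' U) :
    ContDiffOn ℝ 2 m U :=
  contDiffOn_succ_of_hasDerivAt (n := 1) hU hm <|
    contDiffOn_succ_of_hasDerivAt (n := 0) hU hm' (contDiffOn_zero.2 hm'')

theorem eqOn_deriv_deriv_of_hasDerivAt (hU : IsOpen U) (hm : ∀ t ∈ U, HasDerivAt m (m' t) t)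
    (hm' : ∀ t ∈ U, HasDerivAt m' (m'' t) t) : EqOn (deriv (deriv m)) m'' U := fun t ht =>
  ((hm' t ht).congr_of_eventuallyEq <| eventually_of_mem (hU.mem_nhds ht)
    fun s hs => (hm s hs).deriv).deriv

end SecondDerivative

theorem exists_contDiffOn_two_lipschitzOnWith_deriv_deriv_of_ite {m F₁ F₂ : ℝ → ℝ} {x : ℝ}
    (hm : m =ᶠ[𝓝 x] fun t => if t ≤ x then F₁ t else F₂ t)
    (hF₁ : ContDiffAt ℝ 3 F₁ x) (hF₂ : ContDiffAt ℝ 3 F₂ x) (h0 : F₁ x = F₂ x)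
    (h1 : deriv F₁ x = deriv F₂ x) (h2 : deriv (deriv F₁) x = deriv (deriv F₂) x) :
    ∃ r > (0 : ℝ), ContDiffOn ℝ 2 m (Ioo (x - r) (x + r)) ∧
      ∃ L : ℝ≥0, LipschitzOnWith L (deriv (deriv m)) (Ioo (x - r) (x + r)) := by
  obtain ⟨K₁, s₁, hs₁, hK₁⟩ :=
    ((hF₁.derivWithin (m := 2) le_rfl).derivWithin (m := 1) le_rfl).exists_lipschitzOnWith
  obtain ⟨K₂, s₂, hs₂, hK₂⟩ :=
    ((hF₂.derivWithin (m := 2) le_rfl).derivWithin (m := 1) le_rfl).exists_lipschitzOnWith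
  have hnear : ∀ᶠ t in 𝓝 x, (ContDiffAt ℝ 3 F₁ t ∧ ContDiffAt ℝ 3 F₂ t) ∧
      (m t = if t ≤ x then F₁ t else F₂ t) ∧ t ∈ s₁ ∩ s₂ :=
    ((hF₁.eventually (by simp)).and (hF₂.eventually (by simp))).and (hm.and (inter_mem hs₁ hs₂))
  obtain ⟨r, hr, hball⟩ := Metric.mem_nhds_iff.1 hnear
  rw [Real.ball_eq_Ioo] at hball
  set U := Ioo (x - r) (x + r)
  have hU : IsOpen U := isOpen_Ioo
  have hD₁ : ∀ t ∈ U, HasDerivAt m (if t ≤ x then deriv F₁ t else deriv F₂ t) t := by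
    intro t ht
    obtain ⟨⟨hF₁t, hF₂t⟩, -⟩ := hball ht
    refine (hasDerivAt_ite_le h0 h1 (hF₁t.differentiableAt (by simp)).hasDerivAt
      (hF₂t.differentiableAt (by simp)).hasDerivAt).congr_of_eventuallyEq ?_
    exact eventually_of_mem (hU.mem_nhds ht) fun s hs => (hball hs).2.1
  have hD₂ : ∀ t ∈ U, HasDerivAt (fun s => if s ≤ x then deriv F₁ s else deriv F₂ s)
      (if t ≤ x then deriv (deriv F₁) t else deriv (deriv F₂) t) t := by
    intro t ht
    obtain ⟨⟨hF₁t, hF₂t⟩, -⟩ := hball ht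
    exact hasDerivAt_ite_le h1 h2
      ((hF₁t.derivWithin (m := 2) le_rfl).differentiableAt (by simp)).hasDerivAt
      ((hF₂t.derivWithin (m := 2) le_rfl).differentiableAt (by simp)).hasDerivAt
  have hlip : LipschitzOnWith (max K₁ K₂)
      (fun t => if t ≤ x then deriv (deriv F₁) t else deriv (deriv F₂) t) U :=
    ((hK₁.mono fun t ht => (hball ht).2.2.1).weaken (le_max_left _ _)).ite_le
      ((hK₂.mono fun t ht => (hball ht).2.2.2).weaken (le_max_right _ _))
      (by simp [U, hr]) h2
  have hdd := eqOn_deriv_deriv_of_hasDerivAt hU hD₁ hD₂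
  refine ⟨r, hr, contDiffOn_two_of_hasDerivAt hU hD₁ hD₂ hlip.continuousOn, max K₁ K₂, ?_⟩
  intro p hp q hq
  rw [hdd hp, hdd hq]
  exact hlip hp hq

/-- if near a local maximizer the max function agrees with one C³
function on the left and one on the right, then it is C² with Lipschitz second
derivative near the maximizer. -/
theorem stmt_5 {n : ℕ} (hn : 0 < n) (D : Set ℝ) (hD : IsOpen D)
    (f : Fin n → ℝ → ℝ) (hf : ∀ j, ContinuousOn (f j) D)
    (fmax : ℝ → ℝ)
    (hfmax : ∀ t, fmax t =
      Finset.univ.sup' (Finset.univ_nonempty_iff.mpr ⟨⟨0, hn⟩⟩) (fun j => f j t))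
    (x : ℝ) (hx : x ∈ D) (hmax : IsLocalMax fmax x)
    (j₁ j₂ : Fin n) (δ : ℝ) (hδ : 0 < δ)
    (hleft : ∀ ε : ℝ, 0 < ε → ε < δ → fmax (x - ε) = f j₁ (x - ε))
    (hright : ∀ ε : ℝ, 0 < ε → ε < δ → fmax (x + ε) = f j₂ (x + ε))
    (hC3₁ : ContDiffAt ℝ 3 (f j₁) x) (hC3₂ : ContDiffAt ℝ 3 (f j₂) x) :
    ∃ r > (0 : ℝ),
      ContDiffOn ℝ 2 fmax (Set.Ioo (x - r) (x + r)) ∧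
      ∃ L : NNReal, LipschitzOnWith L (deriv (deriv fmax)) (Set.Ioo (x - r) (x + r)) := by
  have hle : ∀ j t, f j t ≤ fmax t := fun j t =>
    (hfmax t).symm ▸ Finset.le_sup' (fun j => f j t) (Finset.mem_univ j)
  have hcont : ContinuousAt fmax x := by
    rw [funext hfmax]
    exact ContinuousAt.finset_sup'_apply _ fun j _ => (hf j).continuousAt (hD.mem_nhds hx)
  have hL : fmax =ᶠ[𝓝[<] x] f j₁ := by
    filter_upwards [Ioo_mem_nhdsLT (sub_lt_self x hδ)] with t ht
    simpa using hleft (x - t) (by linarith [ht.2]) (by linarith [ht.1])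
  have hR : fmax =ᶠ[𝓝[>] x] f j₂ := by
    filter_upwards [Ioo_mem_nhdsGT (lt_add_of_pos_right x hδ)] with t ht
    simpa using hright (t - x) (by linarith [ht.1]) (by linarith [ht.2])
  have hx₁ : fmax x = f j₁ x := hcont.eq_of_eventuallyEq_nhdsWithin hC3₁.continuousAt hL
  have hx₂ : fmax x = f j₂ x := hcont.eq_of_eventuallyEq_nhdsWithin hC3₂.continuousAt hR
  have h0 : f j₁ x = f j₂ x := hx₁.symm.trans hx₂
  obtain ⟨hd₁, hd₂⟩ := deriv_eq_zero_of_isLocalMax_of_eventuallyEq hmax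
    (hC3₁.differentiableAt (by simp)).hasDerivAt (hC3₂.differentiableAt (by simp)).hasDerivAt
    hL hR hx₁ hx₂ (Eventually.of_forall (hle j₁))
  have h1 : deriv (f j₁) x = deriv (f j₂) x := hd₁.trans hd₂.symm
  have h2 := deriv_deriv_eq_of_crossing (hC3₁.of_le (by norm_num)) (hC3₂.of_le (by norm_num))
    h0 h1
    (by filter_upwards [hL] with t ht; exact ht ▸ hle j₂ t)
    (by filter_upwards [hR] with t ht; exact ht ▸ hle j₁ t)
  exact exists_contDiffOn_two_lipschitzOnWith_deriv_deriv_of_ite (eventuallyEq_ite_le hL hR hx₁)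
    hC3₁ hC3₂ h0 h1 h2
end

section
/- Define f_1(t) = t⁸(sin(1/t) − 1) for t ≠ 0 and f_1(0) = 0, and f_2(t) = t⁸(sin(1/(2t)) − 1) for t ≠ 0 and f_2(0) = 0. Then f_1 and f_2 are three times continuously differentiable at 0 (indeed C³ on ℝ), and t = 0 is a global maximizer of f_max = max(f_1, f_2), but t = 0 is not an isolated local maximizer of f_max: every neighborhood of 0 contains another point t ≠ 0 with f_max(t) = 0. -/
noncomputable def Fsin (a : ℝ) (m : ℕ) : ℝ → ℝ :=
  fun t => if t = 0 then 0 else t ^ m * Real.sin (a / t)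

noncomputable def Gcos (a : ℝ) (m : ℕ) : ℝ → ℝ :=
  fun t => if t = 0 then 0 else t ^ m * Real.cos (a / t)

lemma Fsin_bound (a : ℝ) (m : ℕ) (t : ℝ) : |Fsin a m t| ≤ |t| ^ m := by
  unfold Fsin
  split
  · simpa using by positivity
  · rw [abs_mul, abs_pow]
    calc |t| ^ m * |Real.sin (a / t)| ≤ |t| ^ m * 1 := by
          gcongr; exact Real.abs_sin_le_one _
      _ = |t| ^ m := mul_one _

lemma Gcos_bound (a : ℝ) (m : ℕ) (t : ℝ) : |Gcos a m t| ≤ |t| ^ m := by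
  unfold Gcos
  split
  · simpa using by positivity
  · rw [abs_mul, abs_pow]
    calc |t| ^ m * |Real.cos (a / t)| ≤ |t| ^ m * 1 := by
          gcongr; exact Real.abs_cos_le_one _
      _ = |t| ^ m := mul_one _

lemma abs_pow_tendsto (m : ℕ) (hm : 1 ≤ m) :
    Filter.Tendsto (fun t : ℝ => |t| ^ m) (nhds 0) (nhds 0) := by
  have : Filter.Tendsto (fun t : ℝ => |t| ^ m) (nhds 0) (nhds (|(0:ℝ)| ^ m)) := by
    exact ((continuous_abs.pow m).tendsto 0)
  simpa [zero_pow (by omega : m ≠ 0)] using this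

lemma Fsin_cont (a : ℝ) (m : ℕ) (hm : 1 ≤ m) : Continuous (Fsin a m) := by
  rw [continuous_iff_continuousAt]
  intro x
  by_cases hx : x = 0
  · subst hx
    have h0 : Fsin a m 0 = 0 := by simp [Fsin]
    rw [ContinuousAt, h0]
    exact squeeze_zero_norm (fun t => by simpa using Fsin_bound a m t) (abs_pow_tendsto m hm)
  · have hev : Fsin a m =ᶠ[nhds x] fun t => t ^ m * Real.sin (a / t) := by
      filter_upwards [compl_singleton_mem_nhds hx] with t ht
      simp only [Set.mem_compl_iff, Set.mem_singleton_iff] at ht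
      simp [Fsin, ht]
    rw [continuousAt_congr hev]
    exact ContinuousAt.mul (by fun_prop) ((Real.continuous_sin.continuousAt).comp
      (ContinuousAt.div continuousAt_const continuousAt_id hx))

lemma Gcos_cont (a : ℝ) (m : ℕ) (hm : 1 ≤ m) : Continuous (Gcos a m) := by
  rw [continuous_iff_continuousAt]
  intro x
  by_cases hx : x = 0
  · subst hx
    have h0 : Gcos a m 0 = 0 := by simp [Gcos]
    rw [ContinuousAt, h0]
    exact squeeze_zero_norm (fun t => by simpa using Gcos_bound a m t) (abs_pow_tendsto m hm)
  · have hev : Gcos a m =ᶠ[nhds x] fun t => t ^ m * Real.cos (a / t) := by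
      filter_upwards [compl_singleton_mem_nhds hx] with t ht
      simp only [Set.mem_compl_iff, Set.mem_singleton_iff] at ht
      simp [Gcos, ht]
    rw [continuousAt_congr hev]
    exact ContinuousAt.mul (by fun_prop) ((Real.continuous_cos.continuousAt).comp
      (ContinuousAt.div continuousAt_const continuousAt_id hx))

lemma hasDerivAt_div_const (a t : ℝ) (ht : t ≠ 0) :
    HasDerivAt (fun s : ℝ => a / s) (a * -(t ^ 2)⁻¹) t := by
  simpa [div_eq_mul_inv] using (hasDerivAt_inv ht).const_mul a

lemma Fsin_hasDerivAt (a : ℝ) (m : ℕ) (hm : 2 ≤ m) (t : ℝ) :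
    HasDerivAt (Fsin a m) ((m : ℝ) * Fsin a (m - 1) t - a * Gcos a (m - 2) t) t := by
  obtain ⟨k, rfl⟩ : ∃ k, m = k + 2 := ⟨m - 2, by omega⟩
  by_cases ht : t = 0
  · subst ht
    have hval : (((k:ℝ) + 2) : ℝ) * Fsin a (k + 2 - 1) 0 - a * Gcos a (k + 2 - 2) 0 = 0 := by
      simp [Fsin, Gcos]
    rw [show ((k + 2 : ℕ) : ℝ) = (k : ℝ) + 2 by push_cast; ring, hval]
    rw [hasDerivAt_iff_tendsto_slope]
    have hb : ∀ᶠ s in nhdsWithin (0:ℝ) {(0:ℝ)}ᶜ, ‖slope (Fsin a (k + 2)) 0 s‖ ≤ |s| ^ (k + 1) := by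
      filter_upwards [self_mem_nhdsWithin] with s hs
      simp only [Set.mem_compl_iff, Set.mem_singleton_iff] at hs
      have h0 : Fsin a (k + 2) 0 = 0 := by simp [Fsin]
      rw [slope_def_field, h0, sub_zero, sub_zero, div_eq_mul_inv]
      have : Fsin a (k + 2) s * s⁻¹ = s ^ (k + 1) * Real.sin (a / s) := by
        simp only [Fsin, if_neg hs]
        field_simp
        ring
      rw [Real.norm_eq_abs, this, abs_mul, abs_pow]
      calc |s| ^ (k + 1) * |Real.sin (a / s)| ≤ |s| ^ (k + 1) * 1 := by
            gcongr; exact Real.abs_sin_le_one _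
        _ = |s| ^ (k + 1) := mul_one _
    exact squeeze_zero_norm' hb
      ((abs_pow_tendsto (k + 1) (by omega)).mono_left nhdsWithin_le_nhds)
  · have hsin : HasDerivAt (fun s : ℝ => Real.sin (a / s))
        (Real.cos (a / t) * (a * -(t ^ 2)⁻¹)) t :=
      (Real.hasDerivAt_sin (a / t)).comp t (hasDerivAt_div_const a t ht)
    have hmain : HasDerivAt (fun s : ℝ => s ^ (k + 2) * Real.sin (a / s))
        ((((k:ℝ) + 2) * t ^ (k + 1)) * Real.sin (a / t)
          + t ^ (k + 2) * (Real.cos (a / t) * (a * -(t ^ 2)⁻¹))) t := by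
      have := (hasDerivAt_pow (k + 2) t).mul hsin
      exact this.congr_deriv (by rw [show k + 2 - 1 = k + 1 by omega]; push_cast; ring)
    have hev : (fun s : ℝ => s ^ (k + 2) * Real.sin (a / s)) =ᶠ[nhds t] Fsin a (k + 2) := by
      filter_upwards [compl_singleton_mem_nhds ht] with s hs
      simp only [Set.mem_compl_iff, Set.mem_singleton_iff] at hs
      simp [Fsin, hs]
    have := hmain.congr_of_eventuallyEq hev.symm
    refine this.congr_deriv ?_
    simp only [Fsin, Gcos, if_neg ht]
    have h1 : k + 2 - 1 = k + 1 := by omega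
    have h2 : k + 2 - 2 = k := by omega
    rw [h1, h2]
    push_cast
    field_simp
    ring

lemma Gcos_hasDerivAt (a : ℝ) (m : ℕ) (hm : 2 ≤ m) (t : ℝ) :
    HasDerivAt (Gcos a m) ((m : ℝ) * Gcos a (m - 1) t + a * Fsin a (m - 2) t) t := by
  obtain ⟨k, rfl⟩ : ∃ k, m = k + 2 := ⟨m - 2, by omega⟩
  by_cases ht : t = 0
  · subst ht
    have hval : (((k + 2 : ℕ)) : ℝ) * Gcos a (k + 2 - 1) 0 + a * Fsin a (k + 2 - 2) 0 = 0 := by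
      simp [Fsin, Gcos]
    rw [hval]
    rw [hasDerivAt_iff_tendsto_slope]
    have hb : ∀ᶠ s in nhdsWithin (0:ℝ) {(0:ℝ)}ᶜ, ‖slope (Gcos a (k + 2)) 0 s‖ ≤ |s| ^ (k + 1) := by
      filter_upwards [self_mem_nhdsWithin] with s hs
      simp only [Set.mem_compl_iff, Set.mem_singleton_iff] at hs
      have h0 : Gcos a (k + 2) 0 = 0 := by simp [Gcos]
      rw [slope_def_field, h0, sub_zero, sub_zero, div_eq_mul_inv]
      have : Gcos a (k + 2) s * s⁻¹ = s ^ (k + 1) * Real.cos (a / s) := by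
        simp only [Gcos, if_neg hs]
        field_simp
        ring
      rw [Real.norm_eq_abs, this, abs_mul, abs_pow]
      calc |s| ^ (k + 1) * |Real.cos (a / s)| ≤ |s| ^ (k + 1) * 1 := by
            gcongr; exact Real.abs_cos_le_one _
        _ = |s| ^ (k + 1) := mul_one _
    exact squeeze_zero_norm' hb
      ((abs_pow_tendsto (k + 1) (by omega)).mono_left nhdsWithin_le_nhds)
  · have hcos : HasDerivAt (fun s : ℝ => Real.cos (a / s))
        (-Real.sin (a / t) * (a * -(t ^ 2)⁻¹)) t :=
      (Real.hasDerivAt_cos (a / t)).comp t (hasDerivAt_div_const a t ht)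
    have hmain : HasDerivAt (fun s : ℝ => s ^ (k + 2) * Real.cos (a / s))
        ((((k:ℝ) + 2) * t ^ (k + 1)) * Real.cos (a / t)
          + t ^ (k + 2) * (-Real.sin (a / t) * (a * -(t ^ 2)⁻¹))) t := by
      have := (hasDerivAt_pow (k + 2) t).mul hcos
      exact this.congr_deriv (by rw [show k + 2 - 1 = k + 1 by omega]; push_cast; ring)
    have hev : (fun s : ℝ => s ^ (k + 2) * Real.cos (a / s)) =ᶠ[nhds t] Gcos a (k + 2) := by
      filter_upwards [compl_singleton_mem_nhds ht] with s hs
      simp only [Set.mem_compl_iff, Set.mem_singleton_iff] at hs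
      simp [Gcos, hs]
    have := hmain.congr_of_eventuallyEq hev.symm
    refine this.congr_deriv ?_
    simp only [Fsin, Gcos, if_neg ht]
    have h1 : k + 2 - 1 = k + 1 := by omega
    have h2 : k + 2 - 2 = k := by omega
    rw [h1, h2]
    push_cast
    field_simp
    ring

lemma key (n : ℕ) : ∀ (a : ℝ) (m : ℕ), 2 * n + 1 ≤ m →
    ContDiff ℝ n (Fsin a m) ∧ ContDiff ℝ n (Gcos a m) := by
  induction n with
  | zero =>
    intro a m hm
    exact ⟨contDiff_zero.mpr (Fsin_cont a m (by omega)),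
      contDiff_zero.mpr (Gcos_cont a m (by omega))⟩
  | succ n ih =>
    intro a m hm
    have hm2 : 2 ≤ m := by omega
    have hdF : deriv (Fsin a m) = fun t => (m : ℝ) * Fsin a (m - 1) t - a * Gcos a (m - 2) t :=
      funext fun t => (Fsin_hasDerivAt a m hm2 t).deriv
    have hdG : deriv (Gcos a m) = fun t => (m : ℝ) * Gcos a (m - 1) t + a * Fsin a (m - 2) t :=
      funext fun t => (Gcos_hasDerivAt a m hm2 t).deriv
    have h1 := ih a (m - 1) (by omega)
    have h2 := ih a (m - 2) (by omega)
    constructor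
    · push_cast
      rw [contDiff_succ_iff_deriv]
      refine ⟨fun t => (Fsin_hasDerivAt a m hm2 t).differentiableAt,
        fun h => by simp at h, ?_⟩
      rw [hdF]
      exact (contDiff_const.mul h1.1).sub (contDiff_const.mul h2.2)
    · push_cast
      rw [contDiff_succ_iff_deriv]
      refine ⟨fun t => (Gcos_hasDerivAt a m hm2 t).differentiableAt,
        fun h => by simp at h, ?_⟩
      rw [hdG]
      exact (contDiff_const.mul h1.2).add (contDiff_const.mul h2.1)

/-- the C³ functions t⁸(sin(1/t)−1) and t⁸(sin(1/(2t))−1) give a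
max function with global maximizer 0 which is not an isolated maximizer. -/
theorem stmt_7 (f₁ f₂ : ℝ → ℝ)
    (hf₁ : ∀ t : ℝ, t ≠ 0 → f₁ t = t ^ 8 * (Real.sin (1 / t) - 1))
    (hf₁0 : f₁ 0 = 0)
    (hf₂ : ∀ t : ℝ, t ≠ 0 → f₂ t = t ^ 8 * (Real.sin (1 / (2 * t)) - 1))
    (hf₂0 : f₂ 0 = 0) :
    ContDiff ℝ 3 f₁ ∧ ContDiff ℝ 3 f₂ ∧
    (∀ t : ℝ, max (f₁ t) (f₂ t) ≤ max (f₁ 0) (f₂ 0)) ∧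
    (∀ δ > (0 : ℝ), ∃ t : ℝ, t ≠ 0 ∧ |t| < δ ∧ max (f₁ t) (f₂ t) = 0) := by
  have hF1 : f₁ = fun t => Fsin 1 8 t - t ^ 8 := by
    funext t
    by_cases ht : t = 0
    · subst ht; simp [Fsin, hf₁0]
    · rw [hf₁ t ht]; simp only [Fsin, if_neg ht]; ring
  have hF2 : f₂ = fun t => Fsin (1/2) 8 t - t ^ 8 := by
    funext t
    by_cases ht : t = 0
    · subst ht; simp [Fsin, hf₂0]
    · rw [hf₂ t ht]; simp only [Fsin, if_neg ht]
      rw [show (1:ℝ)/2/t = 1/(2*t) by rw [div_div]]; ring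
  have hcd1 : ContDiff ℝ 3 f₁ := by
    rw [hF1]
    have h := ((key 3 1 8 (by norm_num)).1).sub (contDiff_id.pow 8)
    exact_mod_cast h
  have hcd2 : ContDiff ℝ 3 f₂ := by
    rw [hF2]
    have h := ((key 3 (1/2) 8 (by norm_num)).1).sub (contDiff_id.pow 8)
    exact_mod_cast h
  have h1np : ∀ t : ℝ, f₁ t ≤ 0 := by
    intro t
    by_cases ht : t = 0
    · subst ht; rw [hf₁0]
    · rw [hf₁ t ht]
      exact mul_nonpos_of_nonneg_of_nonpos (by positivity)
        (sub_nonpos.mpr (Real.sin_le_one _))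
  have h2np : ∀ t : ℝ, f₂ t ≤ 0 := by
    intro t
    by_cases ht : t = 0
    · subst ht; rw [hf₂0]
    · rw [hf₂ t ht]
      exact mul_nonpos_of_nonneg_of_nonpos (by positivity)
        (sub_nonpos.mpr (Real.sin_le_one _))
  refine ⟨hcd1, hcd2, ?_, ?_⟩
  · intro t
    rw [hf₁0, hf₂0, max_self]
    exact max_le (h1np t) (h2np t)
  · intro δ hδ
    obtain ⟨n, hn⟩ := exists_nat_gt (max (1/δ) 1)
    have hn1 : (1:ℝ) ≤ n := le_of_lt (lt_of_le_of_lt (le_max_right _ _) hn)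
    have hnd : 1/δ < n := lt_of_le_of_lt (le_max_left _ _) hn
    have hπ := Real.pi_gt_three
    set D : ℝ := Real.pi/2 + n * (2 * Real.pi) with hDdef
    have hD : 1/δ < D := by nlinarith
    have hDpos : 0 < D := lt_trans (by positivity) hD
    refine ⟨D⁻¹, inv_ne_zero (ne_of_gt hDpos), ?_, ?_⟩
    · rw [abs_of_pos (inv_pos.mpr hDpos)]
      rw [show D⁻¹ = 1/D by rw [one_div], div_lt_iff₀ hDpos]
      have h := mul_lt_mul_of_pos_left hD hδ
      rw [mul_one_div, div_self (ne_of_gt hδ)] at h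
      linarith
    · have hsin : Real.sin D = 1 := by
        rw [hDdef, Real.sin_add_nat_mul_two_pi, Real.sin_pi_div_two]
      have hf1v : f₁ D⁻¹ = 0 := by
        rw [hf₁ _ (inv_ne_zero (ne_of_gt hDpos))]
        rw [one_div, inv_inv, hsin]
        ring
      rw [hf1v]
      exact max_eq_left (h2np _)
end

section
/- Let H : D → ℝ^{n×n} (Hermitian-matrix valued) be such that in a neighborhood of each point the eigenvalues of H(t) can be written as n real analytic functions μ_1(t), ..., μ_n(t) (not necessarily ordered). Then λ_max ∘ H is twice continuously differentiable with locally Lipschitz second derivative in a neighborhood of every local maximizer of λ_max ∘ H. -/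
open Set Filter Topology


private lemma analyticAt_deriv' {f : ℝ → ℝ} {x : ℝ} (h : AnalyticAt ℝ f x) :
    AnalyticAt ℝ (deriv f) x := by
  obtain ⟨s, hs, hf⟩ := h.eventually_analyticAt.exists_mem
  exact (AnalyticOnNhd.deriv (fun y hy => hf y hy)) x (mem_of_mem_nhds hs)

private lemma analyticAt_dslope' {f : ℝ → ℝ} {x : ℝ} (h : AnalyticAt ℝ f x) :
    AnalyticAt ℝ (dslope f x) x := by
  rcases h with ⟨p, hp⟩
  exact ⟨p.fslope, hp.has_fpower_series_dslope_fslope⟩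

/-- helper A -/
private lemma max_eq_single {n : ℕ} (ne : (Finset.univ : Finset (Fin n)).Nonempty)
    (μ : Fin n → ℝ → ℝ) (J : Set ℝ) (hJ : J.OrdConnected)
    (hcont : ∀ j, ∀ t ∈ J, ContinuousAt (μ j) t)
    (hdich : ∀ i j : Fin n, (Set.EqOn (μ i) (μ j) J) ∨ (∀ t ∈ J, μ i t ≠ μ j t))
    (t0 : ℝ) (ht0 : t0 ∈ J) :
    ∃ b, ∀ t ∈ J, Finset.univ.sup' ne (fun j => μ j t) = μ b t := by
  obtain ⟨b, -, hb⟩ := Finset.exists_mem_eq_sup' ne (fun j => μ j t0)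
  refine ⟨b, fun t ht => ?_⟩
  obtain ⟨c, -, hc⟩ := Finset.exists_mem_eq_sup' ne (fun j => μ j t)
  have hble : μ b t ≤ Finset.univ.sup' ne (fun j => μ j t) :=
    Finset.le_sup' (fun j => μ j t) (Finset.mem_univ b)
  by_contra hne
  have hlt : μ b t < μ c t := lt_of_le_of_ne (hc ▸ hble) (fun h => hne (hc ▸ h.symm))
  have hle0 : μ c t0 ≤ μ b t0 := hb ▸ Finset.le_sup' (fun j => μ j t0) (Finset.mem_univ c)
  rcases hdich c b with H | H
  · exact absurd (H ht) (ne_of_gt hlt)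
  · have hlt0 : μ c t0 < μ b t0 := lt_of_le_of_ne hle0 (H t0 ht0)
    have hsub : Set.uIcc t0 t ⊆ J := hJ.uIcc_subset ht0 ht
    have hcont' : ContinuousOn (fun s => μ c s - μ b s) (Set.uIcc t0 t) := fun s hs =>
      (((hcont c s (hsub hs)).sub (hcont b s (hsub hs))).continuousWithinAt)
    have h0 : (0 : ℝ) ∈ Set.uIcc (μ c t0 - μ b t0) (μ c t - μ b t) := by
      rw [Set.mem_uIcc]
      left
      constructor <;> nlinarith
    obtain ⟨s, hs, hs0⟩ := intermediate_value_uIcc hcont' h0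
    exact H s (hsub hs) (by linarith [sub_eq_zero.mp hs0])

/-- helper B : an analytic function vanishing to first order at `x`, which is
`≤ 0` left of `x` and `≥ 0` right of `x`, has vanishing second derivative. -/
private lemma snd_deriv_zero {h : ℝ → ℝ} {x δ : ℝ} (hδ : 0 < δ)
    (hh : AnalyticAt ℝ h x) (h0 : h x = 0) (h1 : deriv h x = 0)
    (hleft : ∀ t ∈ Ioo (x - δ) x, h t ≤ 0)
    (hright : ∀ t ∈ Ioo x (x + δ), 0 ≤ h t) :
    deriv (deriv h) x = 0 := by
  set q := dslope h x with hq
  have hqa : AnalyticAt ℝ q x := analyticAt_dslope' hh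
  have hqx : q x = 0 := by rw [hq, dslope_same, h1]
  -- q t = h t / (t - x) for t ≠ x
  have hqval : ∀ t, t ≠ x → q t = h t / (t - x) := by
    intro t ht
    rw [hq, dslope_of_ne _ ht, slope_def_field, h0, sub_zero]
  -- x is a local minimum of q
  have hmin : IsLocalMin q x := by
    filter_upwards [Ioo_mem_nhds (by linarith : x - δ < x) (by linarith : x < x + δ)]
      with t ht
    rcases lt_trichotomy t x with h' | h' | h'
    · rw [hqx, hqval t (ne_of_lt h')]
      exact div_nonneg_of_nonpos (hleft t ⟨ht.1, h'⟩) (by linarith : t - x ≤ 0)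
    · rw [h', hqx]
    · rw [hqx, hqval t (ne_of_gt h')]
      exact div_nonneg (hright t ⟨h', ht.2⟩) (by linarith)
  have hq1 : deriv q x = 0 := hmin.deriv_eq_zero
  -- h t = (t - x) * q t
  have hfac : ∀ t, h t = (t - x) * q t := by
    intro t
    have := sub_smul_dslope h x t
    simp only [smul_eq_mul, h0, sub_zero] at this
    rw [← this, hq]
  -- deriv h = q + (t-x) * deriv q near x
  have hev : ∀ᶠ t in 𝓝 x, AnalyticAt ℝ q t := hqa.eventually_analyticAt
  have hderiv : deriv h =ᶠ[𝓝 x] fun t => q t + (t - x) * deriv q t := by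
    filter_upwards [hev] with t hqt
    have h1 : HasDerivAt (fun s => s - x) 1 t := (hasDerivAt_id t).sub_const x
    have h2 : HasDerivAt q (deriv q t) t := hqt.differentiableAt.hasDerivAt
    have h3 : HasDerivAt (fun s => (s - x) * q s) (1 * q t + (t - x) * deriv q t) t :=
      h1.mul h2
    have h4 : HasDerivAt h (1 * q t + (t - x) * deriv q t) t := by
      apply h3.congr_of_eventuallyEq
      filter_upwards with s using hfac s
    rw [h4.deriv]; ring
  have hdd : deriv (deriv h) x = deriv (fun t => q t + (t - x) * deriv q t) x :=
    hderiv.deriv_eq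
  rw [hdd]
  have h2 : HasDerivAt q (deriv q x) x := hqa.differentiableAt.hasDerivAt
  have h5 : HasDerivAt (fun s => s - x) 1 x := (hasDerivAt_id x).sub_const x
  have h6 : HasDerivAt (deriv q) (deriv (deriv q) x) x :=
    (analyticAt_deriv' hqa).differentiableAt.hasDerivAt
  have h7 : HasDerivAt (fun t => q t + (t - x) * deriv q t)
      (deriv q x + (1 * deriv q x + (x - x) * deriv (deriv q) x)) x :=
    h2.add (h5.mul h6)
  rw [h7.deriv, hq1]; ring

/-- Lipschitz for an analytic function on a compact interval. -/
private lemma lipschitz_of_analytic {f : ℝ → ℝ} {a b : ℝ}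
    (h : ∀ t ∈ Icc a b, AnalyticAt ℝ f t) :
    ∃ K : NNReal, LipschitzOnWith K f (Icc a b) := by
  have hc : ContinuousOn (deriv f) (Icc a b) := fun t ht =>
    ((analyticAt_deriv' (h t ht)).continuousAt).continuousWithinAt
  obtain ⟨C, hC⟩ := (isCompact_Icc).exists_bound_of_continuousOn hc
  refine ⟨C.toNNReal, (convex_Icc a b).lipschitzOnWith_of_nnnorm_deriv_le
    (fun t ht => (h t ht).differentiableAt) (fun t ht => ?_)⟩
  rw [← NNReal.coe_le_coe, coe_nnnorm, Real.coe_toNNReal']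
  exact le_max_of_le_left (hC t ht)

/-- Glue two Lipschitz pieces at a common point. -/
private lemma lipschitzOnWith_glue {f : ℝ → ℝ} {u v x : ℝ} {K : NNReal}
    (hux : u ≤ x) (hxv : x ≤ v)
    (h₁ : LipschitzOnWith K f (Icc u x)) (h₂ : LipschitzOnWith K f (Icc x v)) :
    LipschitzOnWith K f (Icc u v) := by
  rw [lipschitzOnWith_iff_dist_le_mul] at h₁ h₂ ⊢
  intro s hs t ht
  rcases le_or_gt s x with h1 | h1 <;> rcases le_or_gt t x with h2 | h2
  · exact h₁ s ⟨hs.1, h1⟩ t ⟨ht.1, h2⟩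
  · calc dist (f s) (f t) ≤ dist (f s) (f x) + dist (f x) (f t) := dist_triangle _ _ _
      _ ≤ K * dist s x + K * dist x t :=
        add_le_add (h₁ s ⟨hs.1, h1⟩ x ⟨hux, le_refl x⟩) (h₂ x ⟨le_refl x, hxv⟩ t ⟨h2.le, ht.2⟩)
      _ ≤ K * dist s t := by
          rw [Real.dist_eq, Real.dist_eq, Real.dist_eq, abs_of_nonpos (by linarith),
            abs_of_nonpos (by linarith), abs_of_nonpos (by linarith)]
          ring_nf
          nlinarith [K.coe_nonneg]
  · calc dist (f s) (f t) ≤ dist (f s) (f x) + dist (f x) (f t) := dist_triangle _ _ _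
      _ ≤ K * dist s x + K * dist x t :=
        add_le_add (h₂ s ⟨h1.le, hs.2⟩ x ⟨le_refl x, hxv⟩) (h₁ x ⟨hux, le_refl x⟩ t ⟨ht.1, h2⟩)
      _ ≤ K * dist s t := by
          rw [Real.dist_eq, Real.dist_eq, Real.dist_eq, abs_of_nonneg (by linarith),
            abs_of_nonneg (by linarith), abs_of_nonneg (by linarith)]
          ring_nf
          nlinarith [K.coe_nonneg]
  · exact h₂ s ⟨h1.le, hs.2⟩ t ⟨h2.le, ht.2⟩


private lemma lipschitzOnWith_congr' {K : NNReal} {f g : ℝ → ℝ} {s : Set ℝ}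
    (h : LipschitzOnWith K f s) (he : ∀ t ∈ s, g t = f t) : LipschitzOnWith K g s := by
  intro a ha b hb
  rw [he a ha, he b hb]
  exact h ha hb

private lemma lipschitzOnWith_weaken' {K K' : NNReal} {f : ℝ → ℝ} {s : Set ℝ}
    (h : LipschitzOnWith K f s) (hK : K ≤ K') : LipschitzOnWith K' f s := by
  intro a ha b hb
  exact le_trans (h ha hb) (mul_le_mul_left (ENNReal.coe_le_coe.mpr hK) _)

/-- Gluing two analytic pieces with matching derivatives up to order 2 at `x`. -/
private lemma glue_C2 {f₁ f₂ g : ℝ → ℝ} {x δ : ℝ} (hδ : 0 < δ)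
    (h₁ : ∀ t ∈ Ioo (x - δ) (x + δ), AnalyticAt ℝ f₁ t)
    (h₂ : ∀ t ∈ Ioo (x - δ) (x + δ), AnalyticAt ℝ f₂ t)
    (e₁ : ∀ t ∈ Ioc (x - δ) x, g t = f₁ t)
    (e₂ : ∀ t ∈ Ico x (x + δ), g t = f₂ t)
    (d1 : deriv f₁ x = deriv f₂ x)
    (d2 : deriv (deriv f₁) x = deriv (deriv f₂) x) :
    ContDiffOn ℝ 2 g (Ioo (x - δ/2) (x + δ/2)) ∧
      ∃ L : NNReal, LipschitzOnWith L (deriv (deriv g)) (Ioo (x - δ/2) (x + δ/2)) := by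
  set S := Ioo (x - δ) (x + δ) with hSdef
  have hSopen : IsOpen S := isOpen_Ioo
  have hxS : x ∈ S := by constructor <;> simp <;> linarith
  set G1 : ℝ → ℝ := fun t => if t ≤ x then deriv f₁ t else deriv f₂ t with hG1def
  set G2 : ℝ → ℝ := fun t => if t ≤ x then deriv (deriv f₁) t else deriv (deriv f₂) t
    with hG2def
  have hSnhds : ∀ t ∈ S, S ∈ 𝓝 t := fun t ht => hSopen.mem_nhds ht
  -- g has derivative G1 on S
  have hgS : ∀ t ∈ S, HasDerivAt g (G1 t) t := by
    intro t ht
    rcases lt_trichotomy t x with h' | h' | h'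
    · have hev : g =ᶠ[𝓝 t] f₁ := by
        filter_upwards [Ioo_mem_nhds ht.1 h'] with s hs
        exact e₁ s ⟨hs.1, hs.2.le⟩
      have : HasDerivAt g (deriv f₁ t) t :=
        ((h₁ t ht).differentiableAt.hasDerivAt).congr_of_eventuallyEq hev
      simpa [hG1def, if_pos h'.le] using this
    · subst h'
      have hgt : g t = f₁ t := e₁ t ⟨by linarith [ht.1], le_refl t⟩
      have hgt2 : g t = f₂ t := e₂ t ⟨le_refl t, by linarith [ht.2]⟩
      have wl : HasDerivWithinAt g (deriv f₁ t) (Iic t) t := by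
        refine ((h₁ t ht).differentiableAt.hasDerivAt.hasDerivWithinAt).congr_of_eventuallyEq
          ?_ hgt
        filter_upwards [eventually_nhdsWithin_of_eventually_nhds
          (eventually_mem_nhds_iff.mpr (hSnhds t ht) |>.mono fun s hs => mem_of_mem_nhds hs),
          eventually_mem_nhdsWithin] with s hsS hsI
        exact e₁ s ⟨hsS.1, hsI⟩
      have wr : HasDerivWithinAt g (deriv f₁ t) (Ici t) t := by
        rw [d1]
        refine ((h₂ t ht).differentiableAt.hasDerivAt.hasDerivWithinAt).congr_of_eventuallyEq
          ?_ hgt2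
        filter_upwards [eventually_nhdsWithin_of_eventually_nhds
          (eventually_mem_nhds_iff.mpr (hSnhds t ht) |>.mono fun s hs => mem_of_mem_nhds hs),
          eventually_mem_nhdsWithin] with s hsS hsI
        exact e₂ s ⟨hsI, hsS.2⟩
      have := (wl.union wr)
      rw [Iic_union_Ici, hasDerivWithinAt_univ] at this
      simpa [hG1def, if_pos (le_refl t)] using this
    · have hev : g =ᶠ[𝓝 t] f₂ := by
        filter_upwards [Ioo_mem_nhds h' ht.2] with s hs
        exact e₂ s ⟨hs.1.le, hs.2⟩
      have : HasDerivAt g (deriv f₂ t) t :=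
        ((h₂ t ht).differentiableAt.hasDerivAt).congr_of_eventuallyEq hev
      simpa [hG1def, if_neg (not_le.mpr h')] using this
  -- G1 has derivative G2 on S
  have hG1S : ∀ t ∈ S, HasDerivAt G1 (G2 t) t := by
    intro t ht
    rcases lt_trichotomy t x with h' | h' | h'
    · have hev : G1 =ᶠ[𝓝 t] deriv f₁ := by
        filter_upwards [Iio_mem_nhds h'] with s hs
        have hsx : s ≤ x := le_of_lt hs
        simp only [hG1def]
        exact if_pos hsx
      have : HasDerivAt (deriv f₁) (deriv (deriv f₁) t) t :=
        (analyticAt_deriv' (h₁ t ht)).differentiableAt.hasDerivAt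
      have := this.congr_of_eventuallyEq hev
      simpa [hG2def, if_pos h'.le] using this
    · subst h'
      have wl : HasDerivWithinAt G1 (deriv (deriv f₁) t) (Iic t) t := by
        refine HasDerivWithinAt.congr
          ((analyticAt_deriv' (h₁ t ht)).differentiableAt.hasDerivAt.hasDerivWithinAt)
          (fun s hs => ?_) (by simp only [hG1def]; exact if_pos (le_refl t))
        simp only [hG1def]
        exact if_pos (hs : s ≤ t)
      have wr : HasDerivWithinAt G1 (deriv (deriv f₁) t) (Ici t) t := by
        rw [d2]
        refine HasDerivWithinAt.congr
          ((analyticAt_deriv' (h₂ t ht)).differentiableAt.hasDerivAt.hasDerivWithinAt)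
          (fun s hs => ?_) (by simp only [hG1def]; rw [if_pos (le_refl t)]; exact d1)
        rcases eq_or_lt_of_le (Set.mem_Ici.mp hs) with h | h
        · simp only [hG1def]; rw [← h, if_pos (le_refl t)]; exact d1
        · simp only [hG1def]; exact if_neg (not_le.mpr h)
      have := (wl.union wr)
      rw [Iic_union_Ici, hasDerivWithinAt_univ] at this
      simpa [hG2def, if_pos (le_refl t)] using this
    · have hev : G1 =ᶠ[𝓝 t] deriv f₂ := by
        filter_upwards [Ioi_mem_nhds h'] with s hs
        simp only [hG1def]
        exact if_neg (not_le.mpr (hs : x < s))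
      have : HasDerivAt (deriv f₂) (deriv (deriv f₂) t) t :=
        (analyticAt_deriv' (h₂ t ht)).differentiableAt.hasDerivAt
      have := this.congr_of_eventuallyEq hev
      simpa [hG2def, if_neg (not_le.mpr h')] using this
  -- G2 is continuous on S
  have hG2cont : ∀ t ∈ S, ContinuousAt G2 t := by
    intro t ht
    rcases lt_trichotomy t x with h' | h' | h'
    · have hev : G2 =ᶠ[𝓝 t] deriv (deriv f₁) := by
        filter_upwards [Iio_mem_nhds h'] with s hs
        have hsx : s ≤ x := le_of_lt hs
        simp only [hG2def]
        exact if_pos hsx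
      exact ((analyticAt_deriv' (analyticAt_deriv' (h₁ t ht))).continuousAt).congr hev.symm
    · subst h'
      have wl : ContinuousWithinAt G2 (Iic t) t := by
        refine ContinuousWithinAt.congr
          ((analyticAt_deriv' (analyticAt_deriv' (h₁ t ht))).continuousAt.continuousWithinAt)
          (fun s hs => ?_) (by simp only [hG2def]; exact if_pos (le_refl t))
        simp only [hG2def]
        exact if_pos (hs : s ≤ t)
      have wr : ContinuousWithinAt G2 (Ici t) t := by
        refine ContinuousWithinAt.congr
          ((analyticAt_deriv' (analyticAt_deriv' (h₂ t ht))).continuousAt.continuousWithinAt)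
          (fun s hs => ?_) (by simp only [hG2def]; rw [if_pos (le_refl t)]; exact d2)
        rcases eq_or_lt_of_le (Set.mem_Ici.mp hs) with h | h
        · simp only [hG2def]; rw [← h, if_pos (le_refl t)]; exact d2
        · simp only [hG2def]; exact if_neg (not_le.mpr h)
      have := wl.union wr
      rwa [Iic_union_Ici, continuousWithinAt_univ] at this
    · have hev : G2 =ᶠ[𝓝 t] deriv (deriv f₂) := by
        filter_upwards [Ioi_mem_nhds h'] with s hs
        simp only [hG2def]
        exact if_neg (not_le.mpr (hs : x < s))
      exact ((analyticAt_deriv' (analyticAt_deriv' (h₂ t ht))).continuousAt).congr hev.symm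
  -- identification of derivatives
  have derivg_eq : ∀ t ∈ S, deriv g t = G1 t := fun t ht => (hgS t ht).deriv
  have hderivg_ev : ∀ t ∈ S, deriv g =ᶠ[𝓝 t] G1 := by
    intro t ht
    filter_upwards [hSnhds t ht] with s hs using derivg_eq s hs
  have hdg : ∀ t ∈ S, HasDerivAt (deriv g) (G2 t) t := by
    intro t ht
    exact (hG1S t ht).congr_of_eventuallyEq (hderivg_ev t ht)
  have ddg_eq : ∀ t ∈ S, deriv (deriv g) t = G2 t := fun t ht => (hdg t ht).deriv
  -- C² smoothness
  have hC2 : ContDiffOn ℝ 2 g S := by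
    have h21 : (2 : WithTop ℕ∞) = 1 + 1 := by norm_num
    rw [h21, contDiffOn_succ_iff_deriv_of_isOpen hSopen]
    refine ⟨fun t ht => (hgS t ht).differentiableAt.differentiableWithinAt, by simp, ?_⟩
    have h10 : (1 : WithTop ℕ∞) = 0 + 1 := by norm_num
    rw [h10, contDiffOn_succ_iff_deriv_of_isOpen hSopen]
    refine ⟨fun t ht => (hdg t ht).differentiableAt.differentiableWithinAt, by simp, ?_⟩
    rw [contDiffOn_zero]
    exact fun t ht => ((hG2cont t ht).continuousWithinAt).congr
      (fun s hs => ddg_eq s hs) (ddg_eq t ht)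
  have hsub : Ioo (x - δ/2) (x + δ/2) ⊆ S := by
    apply Ioo_subset_Ioo <;> linarith
  refine ⟨hC2.mono hsub, ?_⟩
  -- Lipschitz second derivative
  have hIccS : Icc (x - δ/2) (x + δ/2) ⊆ S := by
    intro s hs
    constructor
    · have := hs.1; simp only [mem_Icc] at *; linarith
    · have := hs.2; linarith [hs.1]
  have hL1 : ∃ K : NNReal, LipschitzOnWith K G2 (Icc (x - δ/2) x) := by
    obtain ⟨K, hK⟩ := lipschitz_of_analytic (f := deriv (deriv f₁)) (a := x - δ/2) (b := x)
      (fun t ht => analyticAt_deriv' (analyticAt_deriv' (h₁ t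
        (hIccS (Icc_subset_Icc (le_refl _) (by linarith) ht)))))
    refine ⟨K, lipschitzOnWith_congr' hK ?_⟩
    intro s hs
    simp only [hG2def]
    exact if_pos hs.2
  have hL2 : ∃ K : NNReal, LipschitzOnWith K G2 (Icc x (x + δ/2)) := by
    obtain ⟨K, hK⟩ := lipschitz_of_analytic (f := deriv (deriv f₂)) (a := x) (b := x + δ/2)
      (fun t ht => analyticAt_deriv' (analyticAt_deriv' (h₂ t
        (hIccS (Icc_subset_Icc (by linarith) (le_refl _) ht)))))
    refine ⟨K, lipschitzOnWith_congr' hK ?_⟩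
    intro s hs
    rcases eq_or_lt_of_le hs.1 with h | h
    · simp only [hG2def]; rw [← h, if_pos (le_refl x)]; exact d2
    · simp only [hG2def]; exact if_neg (not_le.mpr h)
  obtain ⟨K₁, hK₁⟩ := hL1
  obtain ⟨K₂, hK₂⟩ := hL2
  refine ⟨max K₁ K₂, ?_⟩
  have hglue : LipschitzOnWith (max K₁ K₂) G2 (Icc (x - δ/2) (x + δ/2)) :=
    lipschitzOnWith_glue (x := x) (by linarith) (by linarith)
      (lipschitzOnWith_weaken' hK₁ (le_max_left _ _))
      (lipschitzOnWith_weaken' hK₂ (le_max_right _ _))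
  refine lipschitzOnWith_congr' (hglue.mono Ioo_subset_Icc_self) ?_
  intro s hs
  exact ddg_eq s (hsub hs)

/-- if `g = λ_max ∘ H` is locally the pointwise max of `n` real
analytic eigenvalue functions (Rellich), then `g` is C² with Lipschitz second
derivative near each of its local maximizers. -/
theorem stmt_9 {n : ℕ} (hn : 0 < n) (D : Set ℝ) (hD : IsOpen D)
    (g : ℝ → ℝ)
    (hloc : ∀ y ∈ D, ∃ U ∈ nhds y, U ⊆ D ∧ ∃ μ : Fin n → ℝ → ℝ,
      (∀ j, AnalyticOnNhd ℝ (μ j) U) ∧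
      ∀ t ∈ U, g t =
        Finset.univ.sup' (Finset.univ_nonempty_iff.mpr ⟨⟨0, hn⟩⟩) (fun j => μ j t))
    (x : ℝ) (hx : x ∈ D) (hmax : IsLocalMax g x) :
    ∃ r > (0 : ℝ),
      ContDiffOn ℝ 2 g (Set.Ioo (x - r) (x + r)) ∧
      ∃ L : NNReal, LipschitzOnWith L (deriv (deriv g)) (Set.Ioo (x - r) (x + r)) := by
  obtain ⟨U, hU, hUD, μ, hμ, hg⟩ := hloc x hx
  have hxU : x ∈ U := mem_of_mem_nhds hU
  have ne : (Finset.univ : Finset (Fin n)).Nonempty := Finset.univ_nonempty_iff.mpr ⟨⟨0, hn⟩⟩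
  set F : ℝ → ℝ := fun t => Finset.univ.sup' ne (fun j => μ j t) with hFdef
  have hgF0 : ∀ t ∈ U, g t = F t := hg
  -- dichotomy neighborhoods for each pair
  have key : ∀ i j : Fin n, ∃ V, V ∈ 𝓝 x ∧
      ((∀ t ∈ V, μ i t = μ j t) ∨ (∀ t ∈ V, t ≠ x → μ i t ≠ μ j t)) := by
    intro i j
    rcases (hμ i x hxU).eventually_eq_or_eventually_ne (hμ j x hxU) with H | H
    · exact ⟨_, H, Or.inl fun t ht => ht⟩
    · rw [eventually_nhdsWithin_iff] at H
      exact ⟨_, H, Or.inr fun t ht ht' => ht ht'⟩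
  choose V hVmem hVdich using key
  -- a good interval
  have hbig : ∀ᶠ t in 𝓝 x, t ∈ U ∧ g t ≤ g x ∧ ∀ i j, t ∈ V i j := by
    have h1 : ∀ᶠ t in 𝓝 x, t ∈ U := eventually_mem_nhds_iff.mpr hU |>.mono
      (fun t ht => mem_of_mem_nhds ht)
    have h3 : ∀ᶠ t in 𝓝 x, ∀ i j, t ∈ V i j :=
      eventually_all.mpr fun i => eventually_all.mpr fun j =>
        (eventually_mem_nhds_iff.mpr (hVmem i j)).mono (fun t ht => mem_of_mem_nhds ht)
    filter_upwards [h1, hmax, h3] with t h1 h2 h3 using ⟨h1, h2, h3⟩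
  obtain ⟨δ, hδ, hball⟩ := Metric.eventually_nhds_iff_ball.mp hbig
  rw [Real.ball_eq_Ioo] at hball
  set S := Ioo (x - δ) (x + δ) with hSdef
  have hxS : x ∈ S := by constructor <;> simp <;> linarith
  have hSU : ∀ t ∈ S, t ∈ U := fun t ht => (hball t ht).1
  have hmax' : ∀ t ∈ S, g t ≤ g x := fun t ht => (hball t ht).2.1
  have hSV : ∀ t ∈ S, ∀ i j, t ∈ V i j := fun t ht => (hball t ht).2.2
  have hgF : ∀ t ∈ S, g t = F t := fun t ht => hg t (hSU t ht)
  have hRsub : Ioo x (x + δ) ⊆ S := fun t ht => ⟨by linarith [ht.1], ht.2⟩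
  have hLsub : Ioo (x - δ) x ⊆ S := fun t ht => ⟨ht.1, by linarith [ht.2]⟩
  -- the max is a single branch on each side
  have hdichR : ∀ i j : Fin n, (Set.EqOn (μ i) (μ j) (Ioo x (x + δ))) ∨
      (∀ t ∈ Ioo x (x + δ), μ i t ≠ μ j t) := by
    intro i j
    rcases hVdich i j with H | H
    · exact Or.inl fun t ht => H t (hSV t (hRsub ht) i j)
    · exact Or.inr fun t ht => H t (hSV t (hRsub ht) i j) (ne_of_gt ht.1)
  have hdichL : ∀ i j : Fin n, (Set.EqOn (μ i) (μ j) (Ioo (x - δ) x)) ∨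
      (∀ t ∈ Ioo (x - δ) x, μ i t ≠ μ j t) := by
    intro i j
    rcases hVdich i j with H | H
    · exact Or.inl fun t ht => H t (hSV t (hLsub ht) i j)
    · exact Or.inr fun t ht => H t (hSV t (hLsub ht) i j) (ne_of_lt ht.2)
  obtain ⟨b, hb⟩ := max_eq_single ne μ (Ioo x (x + δ)) Set.ordConnected_Ioo
    (fun j t ht => (hμ j t (hSU t (hRsub ht))).continuousAt) hdichR
    (x + δ/2) ⟨by linarith, by linarith⟩
  obtain ⟨a, ha⟩ := max_eq_single ne μ (Ioo (x - δ) x) Set.ordConnected_Ioo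
    (fun j t ht => (hμ j t (hSU t (hLsub ht))).continuousAt) hdichL
    (x - δ/2) ⟨by linarith, by linarith⟩
  -- continuity of F at x, and boundary values
  have hFcont : ContinuousAt F x := by
    have := Filter.Tendsto.finset_sup'_nhds_apply (f := fun j t => μ j t) (hne := ne)
      (fun j _ => ((hμ j x hxU).continuousAt : Tendsto (μ j) (𝓝 x) (𝓝 (μ j x))))
    exact this
  have hgx : g x = F x := hg x hxU
  have hNeBotL : (𝓝[Ioo (x - δ) x] x).NeBot := by
    apply mem_closure_iff_nhdsWithin_neBot.mp
    rw [closure_Ioo (by linarith : x - δ ≠ x)]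
    exact ⟨by linarith, le_refl x⟩
  have hNeBotR : (𝓝[Ioo x (x + δ)] x).NeBot := by
    apply mem_closure_iff_nhdsWithin_neBot.mp
    rw [closure_Ioo (by linarith : x ≠ x + δ)]
    exact ⟨le_refl x, by linarith⟩
  have hax : μ a x = F x := by
    have h1 : Tendsto (μ a) (𝓝[Ioo (x - δ) x] x) (𝓝 (μ a x)) :=
      ((hμ a x hxU).continuousAt).mono_left nhdsWithin_le_nhds
    have h2 : Tendsto (μ a) (𝓝[Ioo (x - δ) x] x) (𝓝 (F x)) := by
      refine (hFcont.mono_left nhdsWithin_le_nhds).congr' ?_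
      filter_upwards [eventually_mem_nhdsWithin] with t ht using (ha t ht)
    exact tendsto_nhds_unique h1 h2
  have hbx : μ b x = F x := by
    have h1 : Tendsto (μ b) (𝓝[Ioo x (x + δ)] x) (𝓝 (μ b x)) :=
      ((hμ b x hxU).continuousAt).mono_left nhdsWithin_le_nhds
    have h2 : Tendsto (μ b) (𝓝[Ioo x (x + δ)] x) (𝓝 (F x)) := by
      refine (hFcont.mono_left nhdsWithin_le_nhds).congr' ?_
      filter_upwards [eventually_mem_nhdsWithin] with t ht using (hb t ht)
    exact tendsto_nhds_unique h1 h2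
  -- local maxima of the two branches
  have hmaxa : IsLocalMax (μ a) x := by
    filter_upwards [Ioo_mem_nhds hxS.1 hxS.2] with t ht
    calc μ a t ≤ F t := Finset.le_sup' (fun j => μ j t) (Finset.mem_univ a)
      _ = g t := (hgF t ht).symm
      _ ≤ g x := hmax' t ht
      _ = F x := hgx
      _ = μ a x := hax.symm
  have hmaxb : IsLocalMax (μ b) x := by
    filter_upwards [Ioo_mem_nhds hxS.1 hxS.2] with t ht
    calc μ b t ≤ F t := Finset.le_sup' (fun j => μ j t) (Finset.mem_univ b)
      _ = g t := (hgF t ht).symm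
      _ ≤ g x := hmax' t ht
      _ = F x := hgx
      _ = μ b x := hbx.symm
  have da : deriv (μ a) x = 0 := hmaxa.deriv_eq_zero
  have db : deriv (μ b) x = 0 := hmaxb.deriv_eq_zero
  -- second derivatives agree at x
  set h : ℝ → ℝ := fun t => μ b t - μ a t with hhdef
  have hha : AnalyticAt ℝ h x := (hμ b x hxU).sub (hμ a x hxU)
  have h0 : h x = 0 := by simp only [hhdef]; rw [hbx, hax]; ring
  have hdiff : ∀ t ∈ S, deriv h t = deriv (μ b) t - deriv (μ a) t := fun t ht =>
    deriv_sub ((hμ b t (hSU t ht)).differentiableAt) ((hμ a t (hSU t ht)).differentiableAt)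
  have h1 : deriv h x = 0 := by rw [hdiff x hxS, da, db]; ring
  have hleft : ∀ t ∈ Ioo (x - δ) x, h t ≤ 0 := by
    intro t ht
    have : μ b t ≤ F t := Finset.le_sup' (fun j => μ j t) (Finset.mem_univ b)
    have h2 : F t = μ a t := ha t ht
    simp only [hhdef]
    linarith
  have hright : ∀ t ∈ Ioo x (x + δ), 0 ≤ h t := by
    intro t ht
    have : μ a t ≤ F t := Finset.le_sup' (fun j => μ j t) (Finset.mem_univ a)
    have h2 : F t = μ b t := hb t ht
    simp only [hhdef]
    linarith
  have h2 : deriv (deriv h) x = 0 := snd_deriv_zero hδ hha h0 h1 hleft hright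
  have dd_eq : deriv (deriv (μ a)) x = deriv (deriv (μ b)) x := by
    have hev : deriv h =ᶠ[𝓝 x] fun t => deriv (μ b) t - deriv (μ a) t := by
      filter_upwards [Ioo_mem_nhds hxS.1 hxS.2] with t ht using hdiff t ht
    rw [hev.deriv_eq, deriv_fun_sub ((analyticAt_deriv' (hμ b x hxU)).differentiableAt)
      ((analyticAt_deriv' (hμ a x hxU)).differentiableAt)] at h2
    linarith
  -- glue
  have e₁ : ∀ t ∈ Ioc (x - δ) x, g t = μ a t := by
    intro t ht
    rcases eq_or_lt_of_le ht.2 with hteq | htlt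
    · rw [hteq, hgx, hax]
    · exact (hgF t (hLsub ⟨ht.1, htlt⟩)).trans (ha t ⟨ht.1, htlt⟩)
  have e₂ : ∀ t ∈ Ico x (x + δ), g t = μ b t := by
    intro t ht
    rcases eq_or_lt_of_le ht.1 with hteq | htlt
    · rw [← hteq, hgx, hbx]
    · exact (hgF t (hRsub ⟨htlt, ht.2⟩)).trans (hb t ⟨htlt, ht.2⟩)
  have d1 : deriv (μ a) x = deriv (μ b) x := by rw [da, db]
  obtain ⟨hC2, L, hL⟩ := glue_C2 hδ (fun t ht => hμ a t (hSU t ht))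
    (fun t ht => hμ b t (hSU t ht)) e₁ e₂ d1 dd_eq
  exact ⟨δ/2, by linarith, hC2, L, hL⟩
end

section
/- Let f_1, ..., f_n : D → ℝ be real analytic on an open interval D ⊆ ℝ and let f_max(t) = max_j f_j(t). Then for every local maximizer x of f_max, there exist indices j₁, j₂ and δ > 0 such that f_max(x − ε) = f_{j₁}(x − ε) and f_max(x + ε) = f_{j₂}(x + ε) for all 0 < ε < δ; consequently f_max is C² with Lipschitz second derivative on a neighborhood of x. -/
open Filter Set Asymptotics Topology

lemma ev_sup_attained {ι : Type*} {l : Filter ℝ} (F : ι → ℝ → ℝ) :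
    ∀ (s : Finset ι) (hs : s.Nonempty),
    (∀ i ∈ s, ∀ j ∈ s, (∀ᶠ t in l, F i t ≤ F j t) ∨ (∀ᶠ t in l, F j t ≤ F i t)) →
    ∃ j ∈ s, ∀ᶠ t in l, s.sup' hs (fun i => F i t) = F j t := by
  intro s hs
  induction hs using Finset.Nonempty.cons_induction with
  | singleton a => intro _; exact ⟨a, Finset.mem_singleton_self a, by simp⟩
  | cons a s ha hs ih =>
      intro hcomp
      obtain ⟨j, hj, hev⟩ := ih (fun i hi j hj => hcomp i (Finset.mem_cons_of_mem hi) j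
        (Finset.mem_cons_of_mem hj))
      rcases hcomp a (Finset.mem_cons_self a s) j (Finset.mem_cons_of_mem hj) with hle | hle
      · refine ⟨j, Finset.mem_cons_of_mem hj, ?_⟩
        filter_upwards [hev, hle] with t h1 h2
        rw [Finset.sup'_cons hs, h1, sup_eq_right.mpr h2]
      · refine ⟨a, Finset.mem_cons_self a s, ?_⟩
        filter_upwards [hev, hle] with t h1 h2
        rw [Finset.sup'_cons hs, h1, sup_eq_left.mpr h2]

lemma contAt_sup {ι : Type*} {x : ℝ} (F : ι → ℝ → ℝ) :
    ∀ (s : Finset ι) (hs : s.Nonempty), (∀ i ∈ s, ContinuousAt (F i) x) →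
    ContinuousAt (fun t => s.sup' hs (fun i => F i t)) x := by
  intro s hs
  induction hs using Finset.Nonempty.cons_induction with
  | singleton a => intro h; simpa using h a (Finset.mem_singleton_self a)
  | cons a s ha hs ih =>
      intro h
      have h1 : ContinuousAt (fun t => s.sup' hs (fun i => F i t)) x :=
        ih (fun i hi => h i (Finset.mem_cons_of_mem hi))
      have h2 : ContinuousAt (F a) x := h a (Finset.mem_cons_self a s)
      have key : (fun t => (Finset.cons a s ha).sup' (Finset.cons_nonempty ha)
          (fun i => F i t)) = fun t => max (F a t) (s.sup' hs (fun i => F i t)) := by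
        funext t; rw [Finset.sup'_cons hs]
      rw [key]
      exact h2.max h1

lemma sign_const_on_ordConnected (d : ℝ → ℝ) (s : Set ℝ) (hs : s.OrdConnected)
    (hcont : ∀ t ∈ s, ContinuousAt d t) (hne : ∀ t ∈ s, d t ≠ 0) :
    (∀ t ∈ s, 0 < d t) ∨ (∀ t ∈ s, d t < 0) := by
  by_contra hcon
  push_neg at hcon
  obtain ⟨⟨t₀, ht₀, ht₀'⟩, ⟨t₁, ht₁, ht₁'⟩⟩ := hcon
  have hneg : d t₀ < 0 := lt_of_le_of_ne ht₀' (hne t₀ ht₀)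
  have hpos : 0 < d t₁ := lt_of_le_of_ne (le_of_not_gt (by simpa using ht₁')) (Ne.symm (hne t₁ ht₁))
  have hsub : uIcc t₀ t₁ ⊆ s := hs.uIcc_subset ht₀ ht₁
  have hcs : ContinuousOn d (uIcc t₀ t₁) := fun t ht => (hcont t (hsub ht)).continuousWithinAt
  have h0 : (0 : ℝ) ∈ uIcc (d t₀) (d t₁) := by
    rw [Set.mem_uIcc]; left; exact ⟨hneg.le, hpos.le⟩
  obtain ⟨c, hc, hdc⟩ := intermediate_value_uIcc hcs h0
  exact hne c (hsub hc) hdc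

lemma ev_sign_right (d : ℝ → ℝ) (x : ℝ) (hd : AnalyticAt ℝ d x)
    (hc : ∀ᶠ t in 𝓝 x, ContinuousAt d t) :
    (∀ᶠ t in 𝓝[>] x, 0 ≤ d t) ∨ (∀ᶠ t in 𝓝[>] x, d t ≤ 0) := by
  rcases hd.eventually_eq_zero_or_eventually_ne_zero with h | h
  · left
    filter_upwards [nhdsWithin_le_nhds h] with t ht using ht.ge
  · have hne : ∀ᶠ t in 𝓝[>] x, d t ≠ 0 :=
      nhdsWithin_mono x (fun t (ht : t ∈ Set.Ioi x) => ne_of_gt ht) h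
    have hc' : ∀ᶠ t in 𝓝[>] x, ContinuousAt d t := nhdsWithin_le_nhds hc
    obtain ⟨u, hu, hsub⟩ := mem_nhdsGT_iff_exists_Ioo_subset.mp (hne.and hc')
    rcases sign_const_on_ordConnected d (Set.Ioo x u) Set.ordConnected_Ioo
      (fun t ht => (hsub ht).2) (fun t ht => (hsub ht).1) with hpos | hneg
    · left
      filter_upwards [Ioo_mem_nhdsGT hu] with t ht using (hpos t ht).le
    · right
      filter_upwards [Ioo_mem_nhdsGT hu] with t ht using (hneg t ht).le

lemma ev_sign_left (d : ℝ → ℝ) (x : ℝ) (hd : AnalyticAt ℝ d x)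
    (hc : ∀ᶠ t in 𝓝 x, ContinuousAt d t) :
    (∀ᶠ t in 𝓝[<] x, 0 ≤ d t) ∨ (∀ᶠ t in 𝓝[<] x, d t ≤ 0) := by
  rcases hd.eventually_eq_zero_or_eventually_ne_zero with h | h
  · left
    filter_upwards [nhdsWithin_le_nhds h] with t ht using ht.ge
  · have hne : ∀ᶠ t in 𝓝[<] x, d t ≠ 0 :=
      nhdsWithin_mono x (fun t (ht : t ∈ Set.Iio x) => ne_of_lt ht) h
    have hc' : ∀ᶠ t in 𝓝[<] x, ContinuousAt d t := nhdsWithin_le_nhds hc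
    obtain ⟨u, hu, hsub⟩ := mem_nhdsLT_iff_exists_Ioo_subset.mp (hne.and hc')
    rcases sign_const_on_ordConnected d (Set.Ioo u x) Set.ordConnected_Ioo
      (fun t ht => (hsub ht).2) (fun t ht => (hsub ht).1) with hpos | hneg
    · left
      filter_upwards [Ioo_mem_nhdsLT hu] with t ht using (hpos t ht).le
    · right
      filter_upwards [Ioo_mem_nhdsLT hu] with t ht using (hneg t ht).le


lemma piecewise_hasDerivAt {φ : ℝ → ℝ} {x : ℝ} {I : Set ℝ} (hI : IsOpen I)
    (hφ : ∀ t ∈ I, DifferentiableAt ℝ φ t) (hφx : φ x = 0) (hdφx : deriv φ x = 0) :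
    ∀ t ∈ I, HasDerivAt (fun s => if x ≤ s then φ s else 0)
      (if x ≤ t then deriv φ t else 0) t := by
  intro t ht
  rcases lt_trichotomy t x with hlt | heq | hgt
  · rw [if_neg (not_le.mpr hlt)]
    have heq : (fun s => if x ≤ s then φ s else 0) =ᶠ[𝓝 t] (fun _ => (0 : ℝ)) :=
      eventuallyEq_of_mem (isOpen_Iio.mem_nhds hlt) (fun s hs => if_neg (not_le.mpr hs))
    exact (hasDerivAt_const t (0 : ℝ)).congr_of_eventuallyEq heq
  · subst heq
    rw [if_pos le_rfl, hdφx]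
    rw [hasDerivAt_iff_isLittleO]
    simp only [le_refl, if_true, hφx, sub_zero, smul_zero]
    have h1 : (fun s => φ s) =o[𝓝 t] (fun s => s - t) := by
      have := hasDerivAt_iff_isLittleO.mp ((hφ t ht).hasDerivAt)
      rw [hdφx] at this
      simpa [hφx] using this
    have h2 : (fun s => if t ≤ s then φ s else 0) =O[𝓝 t] φ := by
      refine isBigO_of_le _ (fun s => ?_)
      by_cases h : t ≤ s <;> simp [h]
    exact h2.trans_isLittleO h1
  · rw [if_pos hgt.le]
    have heq : (fun s => if x ≤ s then φ s else 0) =ᶠ[𝓝 t] φ :=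
      eventuallyEq_of_mem (isOpen_Ioi.mem_nhds hgt) (fun s hs => if_pos (le_of_lt hs))
    exact ((hφ t ht).hasDerivAt).congr_of_eventuallyEq heq

lemma piecewise_continuousAt {φ : ℝ → ℝ} {x : ℝ} {I : Set ℝ} (hI : IsOpen I)
    (hφ : ∀ t ∈ I, ContinuousAt φ t) (hφx : φ x = 0) :
    ∀ t ∈ I, ContinuousAt (fun s => if x ≤ s then φ s else 0) t := by
  intro t ht
  rcases lt_trichotomy t x with hlt | heq | hgt
  · have heq : (fun _ : ℝ => (0:ℝ)) =ᶠ[𝓝 t] (fun s => if x ≤ s then φ s else 0) :=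
      eventuallyEq_of_mem (isOpen_Iio.mem_nhds hlt) (fun s hs => (if_neg (not_le.mpr hs)).symm)
    exact ContinuousAt.congr continuousAt_const heq
  · subst heq
    have h0 : (fun s => if t ≤ s then φ s else 0) t = 0 := by simp [hφx]
    unfold ContinuousAt
    rw [h0]
    have hb : Tendsto (fun s => ‖φ s‖) (𝓝 t) (𝓝 0) := by
      have h' := ((hφ t ht).norm).tendsto
      rw [hφx, norm_zero] at h'
      exact h'
    refine squeeze_zero_norm (fun s => ?_) hb
    by_cases h : t ≤ s <;> simp [h]
  · have heq : φ =ᶠ[𝓝 t] (fun s => if x ≤ s then φ s else 0) :=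
      eventuallyEq_of_mem (isOpen_Ioi.mem_nhds hgt) (fun s hs => (if_pos (le_of_lt hs)).symm)
    exact ContinuousAt.congr (hφ t ht) heq

lemma piecewise_lipschitz {φ : ℝ → ℝ} {x : ℝ} {K : NNReal} {U : Set ℝ}
    (hL : LipschitzOnWith K φ U) (hxU : x ∈ U) (hφx : φ x = 0) :
    LipschitzOnWith K (fun s => if x ≤ s then φ s else 0) U := by
  rw [lipschitzOnWith_iff_dist_le_mul] at hL ⊢
  intro p hp q hq
  by_cases h1 : x ≤ p <;> by_cases h2 : x ≤ q <;>
    simp only [if_pos, if_neg, h1, h2, if_true, if_false]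
  · exact hL p hp q hq
  · calc dist (φ p) 0 = dist (φ p) (φ x) := by rw [hφx]
      _ ≤ K * dist p x := hL p hp x hxU
      _ ≤ K * dist p q := by
          refine mul_le_mul_of_nonneg_left ?_ K.coe_nonneg
          rw [Real.dist_eq, Real.dist_eq]
          rw [abs_of_nonneg (by linarith : (0:ℝ) ≤ p - x), abs_of_nonneg (by push_neg at h2; linarith : (0:ℝ) ≤ p - q)]
          push_neg at h2; linarith
  · calc dist 0 (φ q) = dist (φ x) (φ q) := by rw [hφx]
      _ ≤ K * dist x q := hL x hxU q hq
      _ ≤ K * dist p q := by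
          refine mul_le_mul_of_nonneg_left ?_ K.coe_nonneg
          rw [Real.dist_eq, Real.dist_eq]
          rw [abs_of_nonpos (by push_neg at h1; linarith : x - q ≤ (0:ℝ)), abs_of_nonpos (by push_neg at h1; linarith : p - q ≤ (0:ℝ))]
          push_neg at h1; linarith
  · simpa using mul_nonneg K.coe_nonneg dist_nonneg

/-- the max of finitely many real analytic functions on an open
interval agrees with a single one of them on each side of any local maximizer,
and hence is C² with Lipschitz second derivative near the maximizer. -/
theorem stmt_10 {n : ℕ} (hn : 0 < n) (a b : ℝ) (D : Set ℝ) (hDab : D = Set.Ioo a b)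
    (f : Fin n → ℝ → ℝ) (hf : ∀ j, AnalyticOnNhd ℝ (f j) D)
    (fmax : ℝ → ℝ)
    (hfmax : ∀ t, fmax t =
      Finset.univ.sup' (Finset.univ_nonempty_iff.mpr ⟨⟨0, hn⟩⟩) (fun j => f j t))
    (x : ℝ) (hx : x ∈ D) (hmax : IsLocalMax fmax x) :
    (∃ j₁ j₂ : Fin n, ∃ δ > (0 : ℝ), ∀ ε : ℝ, 0 < ε → ε < δ →
      fmax (x - ε) = f j₁ (x - ε) ∧ fmax (x + ε) = f j₂ (x + ε)) ∧
    ∃ r > (0 : ℝ),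
      ContDiffOn ℝ 2 fmax (Set.Ioo (x - r) (x + r)) ∧
      ∃ L : NNReal, LipschitzOnWith L (deriv (deriv fmax)) (Set.Ioo (x - r) (x + r)) := by
  classical
  have hD : IsOpen D := by rw [hDab]; exact isOpen_Ioo
  have NE : (Finset.univ : Finset (Fin n)).Nonempty := Finset.univ_nonempty_iff.mpr ⟨⟨0, hn⟩⟩
  have hxD : D ∈ 𝓝 x := hD.mem_nhds hx
  have hmem : ∀ᶠ t in 𝓝 x, t ∈ D := hxD
  -- comparability on the right and on the left
  have hcomp : ∀ (l : Filter ℝ),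
      ((∀ (d : ℝ → ℝ), AnalyticAt ℝ d x → (∀ᶠ t in 𝓝 x, ContinuousAt d t) →
        (∀ᶠ t in l, 0 ≤ d t) ∨ (∀ᶠ t in l, d t ≤ 0))) →
      ∀ i ∈ Finset.univ, ∀ j ∈ (Finset.univ : Finset (Fin n)),
      (∀ᶠ t in l, f i t ≤ f j t) ∨ (∀ᶠ t in l, f j t ≤ f i t) := by
    intro l hsign i _ j _
    have hd : AnalyticAt ℝ (fun t => f j t - f i t) x := ((hf j x hx).sub (hf i x hx))
    have hc : ∀ᶠ t in 𝓝 x, ContinuousAt (fun t => f j t - f i t) t := by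
      filter_upwards [hmem] with t ht using ((hf j t ht).continuousAt.sub (hf i t ht).continuousAt)
    rcases hsign _ hd hc with h | h
    · left; filter_upwards [h] with t ht using sub_nonneg.mp ht
    · right; filter_upwards [h] with t ht using sub_nonpos.mp ht
  obtain ⟨j₂, -, hR⟩ := ev_sup_attained f Finset.univ NE
    (hcomp _ (fun d hd hc => ev_sign_right d x hd hc))
  obtain ⟨j₁, -, hL⟩ := ev_sup_attained f Finset.univ NE
    (hcomp _ (fun d hd hc => ev_sign_left d x hd hc))
  have hRf : ∀ᶠ t in 𝓝[>] x, fmax t = f j₂ t := by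
    filter_upwards [hR] with t ht; rw [hfmax t]; exact ht
  have hLf : ∀ᶠ t in 𝓝[<] x, fmax t = f j₁ t := by
    filter_upwards [hL] with t ht; rw [hfmax t]; exact ht
  obtain ⟨u, hu, hIou⟩ := mem_nhdsGT_iff_exists_Ioo_subset.mp hRf
  obtain ⟨l, hl, hIol⟩ := mem_nhdsLT_iff_exists_Ioo_subset.mp hLf
  rw [Set.mem_Ioi] at hu
  rw [Set.mem_Iio] at hl
  constructor
  · refine ⟨j₁, j₂, min (u - x) (x - l), by simp [hu, hl], fun ε hε hεδ => ?_⟩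
    rw [lt_min_iff] at hεδ
    constructor
    · exact hIol ⟨by linarith [hεδ.2], by linarith⟩
    · exact hIou ⟨by linarith, by linarith [hεδ.1]⟩
  -- Part 2
  · set g := f j₁ with hg_def
    set k := f j₂ with hk_def
    set h : ℝ → ℝ := fun t => k t - g t with hh_def
    have hg : AnalyticOnNhd ℝ g D := hf j₁
    have hk : AnalyticOnNhd ℝ k D := hf j₂
    have hhA : AnalyticOnNhd ℝ h D := hk.sub hg
    have hh1 : AnalyticOnNhd ℝ (deriv h) D := hhA.deriv
    have hh2 : AnalyticOnNhd ℝ (deriv (deriv h)) D := hh1.deriv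
    have hg1 : AnalyticOnNhd ℝ (deriv g) D := hg.deriv
    have hg2 : AnalyticOnNhd ℝ (deriv (deriv g)) D := hg1.deriv
    -- continuity of fmax at x
    have hCf : ContinuousAt fmax x := by
      have hfm : fmax = fun t => Finset.univ.sup' NE (fun j => f j t) := funext hfmax
      rw [hfm]
      exact contAt_sup f Finset.univ NE (fun j _ => (hf j x hx).continuousAt)
    -- fmax x = g x and fmax x = k x
    have hgx : fmax x = g x := by
      have t1 : Filter.Tendsto fmax (𝓝[<] x) (𝓝 (fmax x)) :=
        hCf.continuousWithinAt.tendsto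
      have t2 : Filter.Tendsto fmax (𝓝[<] x) (𝓝 (g x)) :=
        ((hg x hx).continuousAt.continuousWithinAt.tendsto).congr' (hLf.mono fun t ht => ht.symm)
      exact tendsto_nhds_unique t1 t2
    have hkx : fmax x = k x := by
      have t1 : Filter.Tendsto fmax (𝓝[>] x) (𝓝 (fmax x)) :=
        hCf.continuousWithinAt.tendsto
      have t2 : Filter.Tendsto fmax (𝓝[>] x) (𝓝 (k x)) :=
        ((hk x hx).continuousAt.continuousWithinAt.tendsto).congr' (hRf.mono fun t ht => ht.symm)
      exact tendsto_nhds_unique t1 t2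
    have hhx : h x = 0 := by rw [hh_def]; simp [← hgx, ← hkx]
    -- local maxima of g and k at x
    have hle_g : ∀ t, g t ≤ fmax t := fun t => by
      rw [hfmax t]; exact Finset.le_sup' (fun j => f j t) (Finset.mem_univ j₁)
    have hle_k : ∀ t, k t ≤ fmax t := fun t => by
      rw [hfmax t]; exact Finset.le_sup' (fun j => f j t) (Finset.mem_univ j₂)
    have hlm_g : IsLocalMax g x := by
      filter_upwards [hmax] with t ht
      exact le_trans (hle_g t) (le_of_le_of_eq ht hgx)
    have hlm_k : IsLocalMax k x := by
      filter_upwards [hmax] with t ht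
      exact le_trans (hle_k t) (le_of_le_of_eq ht hkx)
    have hd1 : deriv h x = 0 := by
      rw [hh_def]
      rw [deriv_fun_sub (hk x hx).differentiableAt (hg x hx).differentiableAt]
      rw [hlm_g.deriv_eq_zero, hlm_k.deriv_eq_zero]
      ring
    -- sign of h on the two sides
    have hhR : ∀ᶠ t in 𝓝[>] x, 0 ≤ h t := by
      filter_upwards [hRf] with t ht
      rw [hh_def]; simp only [sub_nonneg, ← ht]; exact hle_g t
    have hhL : ∀ᶠ t in 𝓝[<] x, h t ≤ 0 := by
      filter_upwards [hLf] with t ht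
      rw [hh_def]; simp only [sub_nonpos, ← ht]; exact hle_k t
    -- second derivative of h vanishes at x
    have hd2 : deriv (deriv h) x = 0 := by
      by_contra hc
      have hder : HasDerivAt (deriv h) (deriv (deriv h) x) x :=
        ((hh1 x hx).differentiableAt).hasDerivAt
      have hslope := hasDerivAt_iff_tendsto_slope.mp hder
      obtain ⟨δ₀, hδ₀, hball⟩ := Metric.isOpen_iff.mp hD x hx
      rw [Real.ball_eq_Ioo] at hball
      rcases lt_or_gt_of_ne hc with hneg | hpos
      · -- c < 0 : deriv h < 0 on the right, h strictly decreasing, contradicts h ≥ 0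
        have hev : ∀ᶠ t in 𝓝[≠] x, slope (deriv h) x t < 0 :=
          hslope.eventually (eventually_lt_nhds hneg)
        have hev' : ∀ᶠ t in 𝓝[>] x, deriv h t < 0 := by
          have := nhdsWithin_mono x (fun t (ht : t ∈ Set.Ioi x) =>
            (ne_of_gt ht : t ≠ x)) hev
          filter_upwards [this, self_mem_nhdsWithin] with t ht (ht' : x < t)
          rw [slope_def_field, hd1, sub_zero] at ht
          have h2 : (0:ℝ) < t - x := by linarith
          nlinarith [mul_pos (neg_pos.mpr ht) h2, div_mul_cancel₀ (deriv h t) (ne_of_gt h2)]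
        obtain ⟨u', hu', hsub⟩ := mem_nhdsGT_iff_exists_Ioo_subset.mp (hev'.and hhR)
        rw [Set.mem_Ioi] at hu'
        set w := min ((x + u') / 2) (x + δ₀ / 2) with hw_def
        have hww : x < w := by
          apply lt_min <;> [linarith; linarith]
        have hwu : w ≤ (x + u') / 2 := min_le_left _ _
        have hIcc : Set.Icc x w ⊆ D := by
          intro s hs
          apply hball
          have h1 : w ≤ x + δ₀ / 2 := min_le_right _ _
          constructor <;> [linarith [hs.1]; linarith [hs.2]]
        have hanti : StrictAntiOn h (Set.Icc x w) := by
          apply strictAntiOn_of_deriv_neg (convex_Icc _ _)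
          · exact fun s hs => ((hhA s (hIcc hs)).continuousAt).continuousWithinAt
          · intro s hs
            rw [interior_Icc] at hs
            exact (hsub ⟨hs.1, by linarith [hs.2, hwu]⟩).1
        have hcontr : h w < h x := hanti (Set.left_mem_Icc.mpr hww.le)
          (Set.right_mem_Icc.mpr hww.le) hww
        rw [hhx] at hcontr
        exact absurd (hsub ⟨hww, by linarith⟩).2 (not_le.mpr hcontr)
      · -- c > 0 : deriv h < 0 on the left, h strictly decreasing, contradicts h ≤ 0
        have hev : ∀ᶠ t in 𝓝[≠] x, 0 < slope (deriv h) x t :=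
          hslope.eventually (eventually_gt_nhds hpos)
        have hev' : ∀ᶠ t in 𝓝[<] x, deriv h t < 0 := by
          have := nhdsWithin_mono x (fun t (ht : t ∈ Set.Iio x) =>
            (ne_of_lt ht : t ≠ x)) hev
          filter_upwards [this, self_mem_nhdsWithin] with t ht (ht' : t < x)
          rw [slope_def_field, hd1, sub_zero] at ht
          have h2 : t - x < 0 := by linarith
          nlinarith [mul_pos ht (neg_pos.mpr h2), div_mul_cancel₀ (deriv h t) (ne_of_lt h2)]
        obtain ⟨l', hl', hsub⟩ := mem_nhdsLT_iff_exists_Ioo_subset.mp (hev'.and hhL)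
        rw [Set.mem_Iio] at hl'
        set w := max ((x + l') / 2) (x - δ₀ / 2) with hw_def
        have hww : w < x := by
          apply max_lt <;> [linarith; linarith]
        have hwl : (x + l') / 2 ≤ w := le_max_left _ _
        have hIcc : Set.Icc w x ⊆ D := by
          intro s hs
          apply hball
          have h1 : x - δ₀ / 2 ≤ w := le_max_right _ _
          constructor <;> [linarith [hs.1]; linarith [hs.2]]
        have hanti : StrictAntiOn h (Set.Icc w x) := by
          apply strictAntiOn_of_deriv_neg (convex_Icc _ _)
          · exact fun s hs => ((hhA s (hIcc hs)).continuousAt).continuousWithinAt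
          · intro s hs
            rw [interior_Icc] at hs
            exact (hsub ⟨by linarith [hs.1, hwl], hs.2⟩).1
        have hcontr : h x < h w := hanti (Set.left_mem_Icc.mpr hww.le)
          (Set.right_mem_Icc.mpr hww.le) hww
        rw [hhx] at hcontr
        exact absurd (hsub ⟨by linarith, hww⟩).2 (not_le.mpr (by linarith))
    -- construct the piecewise representation of fmax near x
    obtain ⟨δ₀, hδ₀, hball⟩ := Metric.isOpen_iff.mp hD x hx
    rw [Real.ball_eq_Ioo] at hball
    set δ₁ := min (min (x - l) (u - x)) δ₀ with hδ₁_def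
    have hδ₁ : 0 < δ₁ := lt_min (lt_min (by linarith) (by linarith)) hδ₀
    set I := Set.Ioo (x - δ₁) (x + δ₁) with hI_def
    have hIopen : IsOpen I := isOpen_Ioo
    have hxI : x ∈ I := ⟨by linarith, by linarith⟩
    have hID : I ⊆ D := by
      intro s hs
      have h1 : δ₁ ≤ δ₀ := min_le_right _ _
      exact hball ⟨by linarith [hs.1], by linarith [hs.2]⟩
    set P : ℝ → ℝ := fun s => if x ≤ s then h s else 0 with hP_def
    set P1 : ℝ → ℝ := fun s => if x ≤ s then deriv h s else 0 with hP1_def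
    set P2 : ℝ → ℝ := fun s => if x ≤ s then deriv (deriv h) s else 0 with hP2_def
    have hδl : δ₁ ≤ x - l := le_trans (min_le_left _ _) (min_le_left _ _)
    have hδu : δ₁ ≤ u - x := le_trans (min_le_left _ _) (min_le_right _ _)
    have hFP : ∀ t ∈ I, fmax t = g t + P t := by
      intro t ht
      rcases lt_trichotomy t x with h1 | h1 | h1
      · rw [hP_def]
        simp only [if_neg (not_le.mpr h1), add_zero]
        exact hIol ⟨by linarith [ht.1], h1⟩
      · subst h1
        rw [hP_def]
        simp only [le_refl, if_true]
        rw [hhx, add_zero]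
        exact hgx
      · rw [hP_def]
        simp only [if_pos h1.le]
        rw [hIou ⟨h1, by linarith [ht.2]⟩, hh_def]
        ring
    have hPd : ∀ t ∈ I, HasDerivAt P (P1 t) t :=
      piecewise_hasDerivAt hIopen (fun t ht => (hhA t (hID ht)).differentiableAt) hhx hd1
    have hP1d : ∀ t ∈ I, HasDerivAt P1 (P2 t) t :=
      piecewise_hasDerivAt hIopen (fun t ht => (hh1 t (hID ht)).differentiableAt) hd1 hd2
    have hP2c : ∀ t ∈ I, ContinuousAt P2 t :=
      piecewise_continuousAt hIopen (fun t ht => (hh2 t (hID ht)).continuousAt) hd2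
    have hfmaxG : ∀ t ∈ I, HasDerivAt fmax (deriv g t + P1 t) t := by
      intro t ht
      have hG : HasDerivAt (fun s => g s + P s) (deriv g t + P1 t) t :=
        ((hg t (hID ht)).differentiableAt.hasDerivAt).add (hPd t ht)
      exact hG.congr_of_eventuallyEq
        (eventuallyEq_of_mem (hIopen.mem_nhds ht) (fun s hs => hFP s hs))
    have hdfmax : ∀ t ∈ I, deriv fmax t = deriv g t + P1 t := fun t ht => (hfmaxG t ht).deriv
    have hfmaxG2 : ∀ t ∈ I, HasDerivAt (deriv fmax) (deriv (deriv g) t + P2 t) t := by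
      intro t ht
      have hQ : HasDerivAt (fun s => deriv g s + P1 s) (deriv (deriv g) t + P2 t) t :=
        ((hg1 t (hID ht)).differentiableAt.hasDerivAt).add (hP1d t ht)
      exact hQ.congr_of_eventuallyEq
        (eventuallyEq_of_mem (hIopen.mem_nhds ht) (fun s hs => hdfmax s hs))
    have hd2fmax : ∀ t ∈ I, deriv (deriv fmax) t = deriv (deriv g) t + P2 t :=
      fun t ht => (hfmaxG2 t ht).deriv
    have hcont2 : ContinuousOn (deriv (deriv fmax)) I := by
      refine ContinuousOn.congr (f := fun s => deriv (deriv g) s + P2 s) ?_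
        (fun t ht => hd2fmax t ht)
      intro t ht
      exact (((hg2 t (hID ht)).continuousAt).add (hP2c t ht)).continuousWithinAt
    have hcd : ContDiffOn ℝ 2 fmax I := by
      rw [show (2 : WithTop ℕ∞) = 1 + 1 by norm_num,
        contDiffOn_succ_iff_deriv_of_isOpen hIopen]
      refine ⟨fun t ht => (hfmaxG t ht).differentiableAt.differentiableWithinAt,
        by intro hω; exact absurd hω (by norm_num), ?_⟩
      rw [show (1 : WithTop ℕ∞) = 0 + 1 by norm_num,
        contDiffOn_succ_iff_deriv_of_isOpen hIopen]
      refine ⟨fun t ht => (hfmaxG2 t ht).differentiableAt.differentiableWithinAt,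
        by intro hω; exact absurd hω (by norm_num), ?_⟩
      rw [contDiffOn_zero]
      exact hcont2
    -- Lipschitz bound for the second derivative
    obtain ⟨K₁, U₁, hU₁, hL₁⟩ :=
      (((hg2 x hx).contDiffAt) : ContDiffAt ℝ 1 (deriv (deriv g)) x).exists_lipschitzOnWith
    obtain ⟨K₂, U₂, hU₂, hL₂⟩ :=
      (((hh2 x hx).contDiffAt) : ContDiffAt ℝ 1 (deriv (deriv h)) x).exists_lipschitzOnWith
    have hP2L : LipschitzOnWith K₂ P2 U₂ :=
      piecewise_lipschitz hL₂ (mem_of_mem_nhds hU₂) hd2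
    have hmemJ : I ∩ (U₁ ∩ U₂) ∈ 𝓝 x :=
      Filter.inter_mem (hIopen.mem_nhds hxI) (Filter.inter_mem hU₁ hU₂)
    obtain ⟨r, hr, hrsub⟩ := Metric.mem_nhds_iff.mp hmemJ
    rw [Real.ball_eq_Ioo] at hrsub
    have hJI : Set.Ioo (x - r) (x + r) ⊆ I := fun s hs => (hrsub hs).1
    refine ⟨r, hr, hcd.mono hJI, K₁ + K₂, ?_⟩
    rw [lipschitzOnWith_iff_dist_le_mul]
    intro p hp q hq
    rw [hd2fmax p (hJI hp), hd2fmax q (hJI hq)]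
    have e1 := lipschitzOnWith_iff_dist_le_mul.mp hL₁ p (hrsub hp).2.1 q (hrsub hq).2.1
    have e2 := lipschitzOnWith_iff_dist_le_mul.mp hP2L p (hrsub hp).2.2 q (hrsub hq).2.2
    rw [Real.dist_eq] at e1 e2 ⊢
    have heq : deriv (deriv g) p + P2 p - (deriv (deriv g) q + P2 q) =
        (deriv (deriv g) p - deriv (deriv g) q) + (P2 p - P2 q) := by ring
    rw [heq]
    refine le_trans (abs_add_le _ _) ?_
    push_cast
    linarith
end

section
/- Let H : D → ℍⁿ be an analytic Hermitian matrix family whose eigenvalues are locally given by real analytic functions μ_1, ..., μ_n, and suppose x is a local minimizer of the inner spectral radius ρ_in(H(t)) with ρ_in(H(x)) > 0, where ρ_in(M) = 0 if M is singular and ρ_in(M) = ρ(M^{−1})^{−1} otherwise. Then ρ_in ∘ H is C² with Lipschitz second derivative near x. -/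
open Set Filter Topology

/-- Sign constancy of a nonvanishing continuous function on an ord-connected set. -/
lemma my_same_sign {f : ℝ → ℝ} {s : Set ℝ} (hs : s.OrdConnected) (hf : ContinuousOn f s)
    (hne : ∀ t ∈ s, f t ≠ 0) {a b : ℝ} (ha : a ∈ s) (hb : b ∈ s) : 0 < f a * f b := by
  rcases lt_or_gt_of_ne (mul_ne_zero (hne a ha) (hne b hb)) with h | h
  · exfalso
    have hsub : uIcc a b ⊆ s := hs.uIcc_subset ha hb
    have : (0:ℝ) ∈ uIcc (f a) (f b) := by
      rcases mul_neg_iff.mp h with ⟨h1, h2⟩ | ⟨h1, h2⟩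
      · exact mem_uIcc.2 (Or.inr ⟨h2.le, h1.le⟩)
      · exact mem_uIcc.2 (Or.inl ⟨h1.le, h2.le⟩)
    obtain ⟨c, hc, hc0⟩ := intermediate_value_uIcc (hf.mono hsub) this
    exact hne c (hsub hc) hc0
  · exact h

lemma my_strictMonoOn_ball {f : ℝ → ℝ} {s : Set ℝ} (hs : IsOpen s)
    (hf : AnalyticOnNhd ℝ f s) {x : ℝ} (hx : x ∈ s) (hpos : 0 < deriv f x) :
    ∃ δ > 0, Ioo (x - δ) (x + δ) ⊆ s ∧ StrictMonoOn f (Ioo (x - δ) (x + δ)) := by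
  have hd : AnalyticOnNhd ℝ (deriv f) s := hf.deriv
  have hcont : ContinuousAt (deriv f) x := (hd x hx).continuousAt
  have hev : ∀ᶠ t in 𝓝 x, 0 < deriv f t := hcont.eventually_mem (Ioi_mem_nhds hpos)
  have hev' : ∀ᶠ t in 𝓝 x, 0 < deriv f t ∧ t ∈ s := hev.and (hs.eventually_mem hx)
  obtain ⟨δ, hδ, hball⟩ := Metric.eventually_nhds_iff_ball.mp hev'
  rw [Real.ball_eq_Ioo] at hball
  refine ⟨δ, hδ, fun t ht => (hball t ht).2, ?_⟩
  apply strictMonoOn_of_deriv_pos (convex_Ioo _ _)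
  · exact fun t ht => ((hf t (hball t ht).2).differentiableAt.continuousAt).continuousWithinAt
  · intro t ht
    rw [interior_Ioo] at ht
    exact (hball t ht).1

lemma my_strictAntiOn_ball {f : ℝ → ℝ} {s : Set ℝ} (hs : IsOpen s)
    (hf : AnalyticOnNhd ℝ f s) {x : ℝ} (hx : x ∈ s) (hneg : deriv f x < 0) :
    ∃ δ > 0, Ioo (x - δ) (x + δ) ⊆ s ∧ StrictAntiOn f (Ioo (x - δ) (x + δ)) := by
  have hd : AnalyticOnNhd ℝ (deriv f) s := hf.deriv
  have hcont : ContinuousAt (deriv f) x := (hd x hx).continuousAt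
  have hev : ∀ᶠ t in 𝓝 x, deriv f t < 0 := hcont.eventually_mem (Iio_mem_nhds hneg)
  have hev' : ∀ᶠ t in 𝓝 x, deriv f t < 0 ∧ t ∈ s := hev.and (hs.eventually_mem hx)
  obtain ⟨δ, hδ, hball⟩ := Metric.eventually_nhds_iff_ball.mp hev'
  rw [Real.ball_eq_Ioo] at hball
  refine ⟨δ, hδ, fun t ht => (hball t ht).2, ?_⟩
  apply strictAntiOn_of_deriv_neg (convex_Ioo _ _)
  · exact fun t ht => ((hf t (hball t ht).2).differentiableAt.continuousAt).continuousWithinAt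
  · intro t ht
    rw [interior_Ioo] at ht
    exact (hball t ht).1

lemma my_glue_hasDerivAt {a b : ℝ → ℝ} {x : ℝ} {s : Set ℝ} (hs : IsOpen s) (hx : x ∈ s)
    (ha : ∀ t ∈ s, DifferentiableAt ℝ a t) (hb : ∀ t ∈ s, DifferentiableAt ℝ b t)
    (h0 : b x = a x) (h1 : deriv b x = deriv a x) :
    ∀ t ∈ s, HasDerivAt (fun u => if u < x then b u else a u)
      ((fun u => if u < x then deriv b u else deriv a u) t) t := by
  intro t ht
  rcases lt_trichotomy t x with htx | htx | htx
  · simp only [if_pos htx]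
    apply (hb t ht).hasDerivAt.congr_of_eventuallyEq
    filter_upwards [Iio_mem_nhds htx] with u hu
    exact if_pos (mem_Iio.mp hu)
  · subst htx
    simp only [lt_irrefl, if_neg (lt_irrefl t)]
    have hright : HasDerivWithinAt (fun u => if u < t then b u else a u) (deriv a t) (Ici t) t := by
      apply ((ha t ht).hasDerivAt.hasDerivWithinAt).congr
      · intro u hu
        exact if_neg (not_lt.mpr (mem_Ici.mp hu))
      · exact if_neg (lt_irrefl t)
    have hleft : HasDerivWithinAt (fun u => if u < t then b u else a u) (deriv a t) (Iic t) t := by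
      rw [← h1]
      apply ((hb t ht).hasDerivAt.hasDerivWithinAt).congr
      · intro u hu
        rcases lt_or_eq_of_le (mem_Iic.mp hu) with h | h
        · exact if_pos h
        · subst h; rw [if_neg (lt_irrefl u), h0]
      · rw [if_neg (lt_irrefl t), h0]
    have := hleft.union hright
    rwa [Iic_union_Ici, hasDerivWithinAt_univ] at this
  · simp only [if_neg (not_lt.mpr htx.le)]
    apply (ha t ht).hasDerivAt.congr_of_eventuallyEq
    filter_upwards [Ioi_mem_nhds htx] with u hu
    exact if_neg (not_lt.mpr (le_of_lt (mem_Ioi.mp hu)))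

lemma my_glue_continuousAt {u v : ℝ → ℝ} {x : ℝ} {s : Set ℝ} (hs : IsOpen s) (hx : x ∈ s)
    (hu : ∀ t ∈ s, ContinuousAt u t) (hv : ∀ t ∈ s, ContinuousAt v t)
    (h0 : v x = u x) :
    ∀ t ∈ s, ContinuousAt (fun w => if w < x then v w else u w) t := by
  intro t ht
  rcases lt_trichotomy t x with htx | htx | htx
  · apply (hv t ht).congr
    filter_upwards [Iio_mem_nhds htx] with w hw
    exact (if_pos (mem_Iio.mp hw)).symm
  · subst htx
    rw [← continuousWithinAt_univ, ← Iic_union_Ici (a := t)]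
    apply ContinuousWithinAt.union
    · apply ((hv t ht).continuousWithinAt).congr
      · intro w hw
        rcases lt_or_eq_of_le (mem_Iic.mp hw) with h | h
        · exact if_pos h
        · subst h; rw [if_neg (lt_irrefl w), h0]
      · rw [if_neg (lt_irrefl t), h0]
    · apply ((hu t ht).continuousWithinAt).congr
      · intro w hw
        exact if_neg (not_lt.mpr (mem_Ici.mp hw))
      · exact if_neg (lt_irrefl t)
  · apply (hu t ht).congr
    filter_upwards [Ioi_mem_nhds htx] with w hw
    exact (if_neg (not_lt.mpr (le_of_lt (mem_Ioi.mp hw)))).symm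

lemma my_lipschitzOnWith_congr {f g : ℝ → ℝ} {s : Set ℝ} {L : NNReal}
    (h : LipschitzOnWith L f s) (he : Set.EqOn g f s) : LipschitzOnWith L g s := by
  intro p hp q hq
  rw [he hp, he hq]
  exact h hp hq

lemma my_glue_lipschitz {u v : ℝ → ℝ} {x c d : ℝ} {L : NNReal}
    (hu : LipschitzOnWith L u (Icc x c)) (hv : LipschitzOnWith L v (Icc d x))
    (h0 : v x = u x) (hdx : d ≤ x) (hxc : x ≤ c) :
    LipschitzOnWith L (fun w => if w < x then v w else u w) (Icc d c) := by
  set G := fun w => if w < x then v w else u w with hG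
  rw [lipschitzOnWith_iff_dist_le_mul] at hu hv ⊢
  have key : ∀ p ∈ Icc d c, ∀ q ∈ Icc d c, p ≤ q → dist (G p) (G q) ≤ L * (q - p) := by
    intro p hp q hq hpq
    have hd : dist p q = q - p := by
      rw [Real.dist_eq, abs_of_nonpos (by linarith)]; ring
    by_cases hq' : q < x
    · have hp' : p < x := lt_of_le_of_lt hpq hq'
      have := hv p ⟨hp.1, hp'.le⟩ q ⟨hq.1, hq'.le⟩
      rw [hd] at this
      simpa only [hG, if_pos hp', if_pos hq'] using this
    · by_cases hp' : p < x
      · have h1 := hv p ⟨hp.1, hp'.le⟩ x ⟨hdx, le_refl x⟩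
        have h2 := hu x ⟨le_refl x, hxc⟩ q ⟨not_lt.mp hq', hq.2⟩
        simp only [hG, if_pos hp', if_neg hq']
        have e1 : dist p x = x - p := by
          rw [Real.dist_eq, abs_of_nonpos (by linarith)]; ring
        have e2 : dist x q = q - x := by
          rw [Real.dist_eq, abs_of_nonpos (by linarith)]; ring
        rw [e1] at h1; rw [e2] at h2
        calc dist (v p) (u q) ≤ dist (v p) (v x) + dist (v x) (u q) := dist_triangle _ _ _
          _ = dist (v p) (v x) + dist (u x) (u q) := by rw [h0]
          _ ≤ L * (x - p) + L * (q - x) := add_le_add h1 h2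
          _ = L * (q - p) := by ring
      · have := hu p ⟨not_lt.mp hp', hp.2⟩ q ⟨le_trans (not_lt.mp hp') hpq, hq.2⟩
        rw [hd] at this
        simpa only [hG, if_neg hp', if_neg hq'] using this
  intro p hp q hq
  rcases le_total p q with h | h
  · have hd : dist p q = q - p := by
      rw [Real.dist_eq, abs_of_nonpos (by linarith)]; ring
    rw [hd]
    exact key p hp q hq h
  · have hd : dist p q = p - q := by
      rw [Real.dist_eq, abs_of_nonneg (by linarith)]
    rw [hd, dist_comm (G p) (G q)]
    exact key q hq p hp h

lemma my_lip_second {f : ℝ → ℝ} {s : Set ℝ} (hf : AnalyticOnNhd ℝ f s)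
    {c d : ℝ} (hsub : Icc c d ⊆ s) {C : ℝ}
    (hC : ∀ t ∈ Icc c d, ‖deriv (deriv (deriv f)) t‖ ≤ C) :
    LipschitzOnWith C.toNNReal (deriv (deriv f)) (Icc c d) := by
  apply (convex_Icc c d).lipschitzOnWith_of_nnnorm_deriv_le
    (fun t ht => ((hf.deriv.deriv) t (hsub ht)).differentiableAt)
  intro t ht
  rw [← norm_toNNReal]
  exact Real.toNNReal_le_toNNReal (hC t ht)

/-- if `g = ρ_in ∘ H` is locally the min of the absolute values of
`n` real analytic eigenvalue functions, and `x` is a local minimizer with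
`g x > 0`, then `g` is C² with Lipschitz second derivative near `x`. -/
theorem stmt_18 {n : ℕ} (hn : 0 < n) (D : Set ℝ) (hD : IsOpen D)
    (g : ℝ → ℝ)
    (hloc : ∀ y ∈ D, ∃ U ∈ nhds y, U ⊆ D ∧ ∃ μ : Fin n → ℝ → ℝ,
      (∀ j, AnalyticOnNhd ℝ (μ j) U) ∧
      ∀ t ∈ U, g t =
        Finset.univ.inf' (Finset.univ_nonempty_iff.mpr ⟨⟨0, hn⟩⟩) (fun j => |μ j t|))
    (x : ℝ) (hx : x ∈ D) (hmin : IsLocalMin g x) (hpos : 0 < g x) :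
    ∃ r > (0 : ℝ),
      ContDiffOn ℝ 2 g (Set.Ioo (x - r) (x + r)) ∧
      ∃ L : NNReal, LipschitzOnWith L (deriv (deriv g)) (Set.Ioo (x - r) (x + r)) := by
  obtain ⟨U, hU, hUD, μ, hμ, hg⟩ := hloc x hx
  have hxU : x ∈ U := mem_of_mem_nhds hU
  have hne : (Finset.univ : Finset (Fin n)).Nonempty := Finset.univ_nonempty_iff.mpr ⟨⟨0, hn⟩⟩
  have hμx : ∀ j, μ j x ≠ 0 := by
    intro j hj
    have h1 : g x ≤ |μ j x| := (hg x hxU) ▸ Finset.inf'_le _ (Finset.mem_univ j)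
    rw [hj, abs_zero] at h1
    linarith
  set f : Fin n → ℝ → ℝ := fun j t => (if 0 < μ j x then (1:ℝ) else -1) * μ j t with hfdef
  have hf_an : ∀ j, AnalyticOnNhd ℝ (f j) U := fun j t ht => analyticAt_const.mul (hμ j t ht)
  have ev2 : ∀ j, ∀ᶠ t in 𝓝 x, |μ j t| = f j t := by
    intro j
    have hcont : ContinuousAt (μ j) x := (hμ j x hxU).continuousAt
    have habs : 0 < |μ j x| := abs_pos.mpr (hμx j)
    have hev := hcont.eventually_mem
      (Ioo_mem_nhds (sub_lt_self _ habs) (lt_add_of_pos_right _ habs))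
    filter_upwards [hev] with t ht
    by_cases hj : 0 < μ j x
    · have h1 : 0 < μ j t := by
        have := ht.1
        rw [abs_of_pos hj] at this
        linarith
      simp only [hfdef, if_pos hj, one_mul, abs_of_pos h1]
    · have hj' : μ j x < 0 := lt_of_le_of_ne (not_lt.mp hj) (hμx j)
      have h1 : μ j t < 0 := by
        have := ht.2
        rw [abs_of_neg hj'] at this
        linarith
      simp only [hfdef, if_neg hj, abs_of_neg h1]
      ring
  have key : ∀ P : Fin n × Fin n, ∃ V, V ∈ 𝓝 x ∧
      ((∀ t ∈ V, f P.1 t = f P.2 t) ∨ (∀ t ∈ V, t ≠ x → f P.1 t ≠ f P.2 t)) := by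
    intro P
    have han : AnalyticAt ℝ (fun t => f P.1 t - f P.2 t) x :=
      (hf_an P.1 x hxU).sub (hf_an P.2 x hxU)
    rcases han.eventually_eq_zero_or_eventually_ne_zero with h | h
    · obtain ⟨V, hV, hV2⟩ := h.exists_mem
      exact ⟨V, hV, Or.inl fun t ht => sub_eq_zero.mp (hV2 t ht)⟩
    · rw [eventually_nhdsWithin_iff] at h
      obtain ⟨V, hV, hV2⟩ := h.exists_mem
      refine ⟨V, hV, Or.inr fun t ht htx => ?_⟩
      intro heq
      exact hV2 t ht (by simpa using htx) (sub_eq_zero.mpr heq)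
  choose V hV hVP using key
  have hWmem : (U ∩ ((⋂ j, {t | |μ j t| = f j t}) ∩ ({t | g x ≤ g t} ∩
      ⋂ P : Fin n × Fin n, V P))) ∈ 𝓝 x :=
    inter_mem hU (inter_mem (Filter.iInter_mem.mpr fun j => ev2 j)
      (inter_mem hmin (Filter.iInter_mem.mpr hV)))
  obtain ⟨r, hr, hball⟩ := Metric.mem_nhds_iff.mp hWmem
  rw [Real.ball_eq_Ioo] at hball
  set I := Ioo (x - r) (x + r) with hIdef
  have hxI : x ∈ I := ⟨by linarith, by linarith⟩
  have hsU : I ⊆ U := fun t ht => (hball ht).1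
  have habs : ∀ j, ∀ t ∈ I, |μ j t| = f j t := fun j t ht =>
    mem_iInter.mp (hball ht).2.1 j
  have hgmin : ∀ t ∈ I, g x ≤ g t := fun t ht => (hball ht).2.2.1
  have hdich : ∀ i j : Fin n, (∀ t ∈ I, f i t = f j t) ∨
      (∀ t ∈ I, t ≠ x → f i t ≠ f j t) := by
    intro i j
    rcases hVP (i, j) with h | h
    · exact Or.inl fun t ht => h t (mem_iInter.mp (hball ht).2.2.2 (i, j))
    · exact Or.inr fun t ht => h t (mem_iInter.mp (hball ht).2.2.2 (i, j))
  have hgf : ∀ t ∈ I, g t = Finset.univ.inf' hne (fun j => f j t) := by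
    intro t ht
    rw [hg t (hsU ht)]
    exact Finset.inf'_congr _ rfl (fun j _ => habs j t ht)
  -- right side
  have hIoo_sub : Ioo x (x + r) ⊆ I := fun t ht => ⟨by linarith [ht.1], ht.2⟩
  have hIoo_subl : Ioo (x - r) x ⊆ I := fun t ht => ⟨ht.1, by linarith [ht.2]⟩
  obtain ⟨p, _, hp⟩ := Finset.exists_min_image Finset.univ (fun j => f j (x + r/2))
    ⟨⟨0, hn⟩, Finset.mem_univ _⟩
  have htp : x + r/2 ∈ Ioo x (x + r) := ⟨by linarith, by linarith⟩
  have claim_right : ∀ t ∈ Ioo x (x + r), ∀ j, f p t ≤ f j t := by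
    intro t ht j
    rcases hdich j p with h | h
    · rw [h t (hIoo_sub ht)]
    · have hcont : ContinuousOn (fun u => f j u - f p u) (Ioo x (x + r)) :=
        fun u hu => (((hf_an j u (hsU (hIoo_sub hu))).sub
          (hf_an p u (hsU (hIoo_sub hu)))).continuousAt).continuousWithinAt
      have hne' : ∀ u ∈ Ioo x (x + r), f j u - f p u ≠ 0 := fun u hu =>
        sub_ne_zero.mpr (h u (hIoo_sub hu) (ne_of_gt hu.1))
      have hsgn := my_same_sign Set.ordConnected_Ioo hcont hne' htp ht
      have h1 : 0 < f j (x + r/2) - f p (x + r/2) :=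
        lt_of_le_of_ne (sub_nonneg.mpr (hp j (Finset.mem_univ j))) (Ne.symm (hne' _ htp))
      nlinarith
  obtain ⟨q, _, hq⟩ := Finset.exists_min_image Finset.univ (fun j => f j (x - r/2))
    ⟨⟨0, hn⟩, Finset.mem_univ _⟩
  have htq : x - r/2 ∈ Ioo (x - r) x := ⟨by linarith, by linarith⟩
  have claim_left : ∀ t ∈ Ioo (x - r) x, ∀ j, f q t ≤ f j t := by
    intro t ht j
    rcases hdich j q with h | h
    · rw [h t (hIoo_subl ht)]
    · have hcont : ContinuousOn (fun u => f j u - f q u) (Ioo (x - r) x) :=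
        fun u hu => (((hf_an j u (hsU (hIoo_subl hu))).sub
          (hf_an q u (hsU (hIoo_subl hu)))).continuousAt).continuousWithinAt
      have hne' : ∀ u ∈ Ioo (x - r) x, f j u - f q u ≠ 0 := fun u hu =>
        sub_ne_zero.mpr (h u (hIoo_subl hu) (ne_of_lt hu.2))
      have hsgn := my_same_sign Set.ordConnected_Ioo hcont hne' htq ht
      have h1 : 0 < f j (x - r/2) - f q (x - r/2) :=
        lt_of_le_of_ne (sub_nonneg.mpr (hq j (Finset.mem_univ j))) (Ne.symm (hne' _ htq))
      nlinarith
  have g_right : ∀ t ∈ Ico x (x + r), g t = f p t := by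
    intro t ht
    rcases eq_or_lt_of_le ht.1 with he | hlt
    · rw [← he, hgf x hxI]
      have hple : ∀ j, f p x ≤ f j x := by
        intro j
        have h1 : Tendsto (f p) (𝓝[>] x) (𝓝 (f p x)) :=
          ((hf_an p x hxU).continuousAt).continuousWithinAt
        have h2 : Tendsto (f j) (𝓝[>] x) (𝓝 (f j x)) :=
          ((hf_an j x hxU).continuousAt).continuousWithinAt
        refine le_of_tendsto_of_tendsto h1 h2 ?_
        filter_upwards [Ioo_mem_nhdsGT_of_mem ⟨le_refl x, (by linarith : x < x + r)⟩] with u hu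
        exact claim_right u hu j
      exact le_antisymm (Finset.inf'_le _ (Finset.mem_univ p))
        (Finset.le_inf' _ _ fun j _ => hple j)
    · rw [hgf t (hIoo_sub ⟨hlt, ht.2⟩)]
      exact le_antisymm (Finset.inf'_le _ (Finset.mem_univ p))
        (Finset.le_inf' _ _ fun j _ => claim_right t ⟨hlt, ht.2⟩ j)
  have g_left : ∀ t ∈ Ioc (x - r) x, g t = f q t := by
    intro t ht
    rcases eq_or_lt_of_le ht.2 with he | hlt
    · rw [he, hgf x hxI]
      have hqle : ∀ j, f q x ≤ f j x := by
        intro j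
        have h1 : Tendsto (f q) (𝓝[<] x) (𝓝 (f q x)) :=
          ((hf_an q x hxU).continuousAt).continuousWithinAt
        have h2 : Tendsto (f j) (𝓝[<] x) (𝓝 (f j x)) :=
          ((hf_an j x hxU).continuousAt).continuousWithinAt
        refine le_of_tendsto_of_tendsto h1 h2 ?_
        filter_upwards [Ioo_mem_nhdsLT_of_mem ⟨(by linarith : x - r < x), le_refl x⟩] with u hu
        exact claim_left u hu j
      exact le_antisymm (Finset.inf'_le _ (Finset.mem_univ q))
        (Finset.le_inf' _ _ fun j _ => hqle j)
    · rw [hgf t (hIoo_subl ⟨ht.1, hlt⟩)]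
      exact le_antisymm (Finset.inf'_le _ (Finset.mem_univ q))
        (Finset.le_inf' _ _ fun j _ => claim_left t ⟨ht.1, hlt⟩ j)
  -- abbreviations
  set a : ℝ → ℝ := f p with hadef
  set b : ℝ → ℝ := f q with hbdef
  have hIopen : IsOpen I := isOpen_Ioo
  have han_a : AnalyticOnNhd ℝ a I := fun t ht => hf_an p t (hsU ht)
  have han_b : AnalyticOnNhd ℝ b I := fun t ht => hf_an q t (hsU ht)
  have hax : a x = g x := (g_right x ⟨le_refl x, by linarith⟩).symm
  have hbx : b x = g x := (g_left x ⟨by linarith, le_refl x⟩).symm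
  have h_right : ∀ t ∈ Ioo x (x + r), a t ≤ b t := by
    intro t ht
    rw [← g_right t ⟨ht.1.le, ht.2⟩, hgf t (hIoo_sub ht)]
    exact Finset.inf'_le _ (Finset.mem_univ q)
  have h_left : ∀ t ∈ Ioo (x - r) x, b t ≤ a t := by
    intro t ht
    rw [← g_left t ⟨ht.1, ht.2.le⟩, hgf t (hIoo_subl ht)]
    exact Finset.inf'_le _ (Finset.mem_univ p)
  have hminr : ∀ t ∈ Ico x (x + r), a x ≤ a t := by
    intro t ht
    rw [hax, ← g_right t ht]
    exact hgmin t ⟨by linarith [ht.1], ht.2⟩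
  have hminl : ∀ t ∈ Ioc (x - r) x, b x ≤ b t := by
    intro t ht
    rw [hbx, ← g_left t ht]
    exact hgmin t ⟨ht.1, by linarith [ht.2]⟩
  have hda : ∀ t ∈ I, DifferentiableAt ℝ a t := fun t ht => (han_a t ht).differentiableAt
  have hdb : ∀ t ∈ I, DifferentiableAt ℝ b t := fun t ht => (han_b t ht).differentiableAt
  -- first derivative facts
  have d1a : 0 ≤ deriv a x := by
    by_contra hlt
    push_neg at hlt
    obtain ⟨δ, hδ, hbs, hanti⟩ := my_strictAntiOn_ball hIopen han_a hxI hlt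
    have hm : 0 < min δ r := lt_min hδ hr
    have h1 : x < x + min δ r / 2 := by linarith
    have hxb : x ∈ Ioo (x - δ) (x + δ) := ⟨by linarith, by linarith⟩
    have htb : x + min δ r / 2 ∈ Ioo (x - δ) (x + δ) := by
      constructor <;> [linarith; linarith [min_le_left δ r]]
    have h2 := hanti hxb htb h1
    have h3 := hminr (x + min δ r / 2) ⟨h1.le, by linarith [min_le_right δ r]⟩
    linarith
  have d1b : deriv b x ≤ 0 := by
    by_contra hlt
    push_neg at hlt
    obtain ⟨δ, hδ, hbs, hmono⟩ := my_strictMonoOn_ball hIopen han_b hxI hlt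
    have hm : 0 < min δ r := lt_min hδ hr
    have h1 : x - min δ r / 2 < x := by linarith
    have hxb : x ∈ Ioo (x - δ) (x + δ) := ⟨by linarith, by linarith⟩
    have htb : x - min δ r / 2 ∈ Ioo (x - δ) (x + δ) := by
      constructor <;> [linarith [min_le_left δ r]; linarith]
    have h2 := hmono htb hxb h1
    have h3 := hminl (x - min δ r / 2) ⟨by linarith [min_le_right δ r], h1.le⟩
    linarith
  set h : ℝ → ℝ := fun t => a t - b t with hhdef
  have hhan : AnalyticOnNhd ℝ h I := fun t ht => (han_a t ht).sub (han_b t ht)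
  have hh0 : h x = 0 := by rw [hhdef]; simp [hax, hbx]
  have hd_sub : ∀ t ∈ I, deriv h t = deriv a t - deriv b t := fun t ht =>
    deriv_sub (hda t ht) (hdb t ht)
  have d1h : deriv h x ≤ 0 := by
    by_contra hlt
    push_neg at hlt
    obtain ⟨δ, hδ, hbs, hmono⟩ := my_strictMonoOn_ball hIopen hhan hxI hlt
    have hm : 0 < min δ r := lt_min hδ hr
    have h1 : x < x + min δ r / 2 := by linarith
    have hxb : x ∈ Ioo (x - δ) (x + δ) := ⟨by linarith, by linarith⟩
    have htb : x + min δ r / 2 ∈ Ioo (x - δ) (x + δ) := by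
      constructor <;> [linarith; linarith [min_le_left δ r]]
    have h2 := hmono hxb htb h1
    rw [hh0] at h2
    have h3 := h_right (x + min δ r / 2) ⟨h1, by linarith [min_le_right δ r]⟩
    have : h (x + min δ r / 2) = a (x + min δ r / 2) - b (x + min δ r / 2) := rfl
    linarith [this ▸ h2]
  have e1 : deriv a x - deriv b x ≤ 0 := by rw [← hd_sub x hxI]; exact d1h
  have hderiv_a0 : deriv a x = 0 := le_antisymm (by linarith) d1a
  have hderiv_eq1 : deriv b x = deriv a x := le_antisymm (by linarith) (by linarith)
  have hd1h0 : deriv h x = 0 := by rw [hd_sub x hxI]; linarith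
  -- second derivative of h vanishes
  have d2 : deriv (deriv h) x = 0 := by
    rcases lt_trichotomy (deriv (deriv h) x) 0 with hlt | he | hgt
    · exfalso
      obtain ⟨δ, hδ, hbs, hanti⟩ := my_strictAntiOn_ball hIopen hhan.deriv hxI hlt
      have hm : 0 < min δ r := lt_min hδ hr
      set c := x - min δ r / 2 with hcdef
      have hcx : c < x := by rw [hcdef]; linarith
      have hcI : Icc c x ⊆ I := fun u hu =>
        ⟨by simp only [hcdef] at hu; linarith [hu.1, min_le_right δ r], by linarith [hu.2]⟩
      have hpos : ∀ u ∈ Ioo c x, 0 < deriv h u := by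
        intro u hu
        have hub : u ∈ Ioo (x - δ) (x + δ) := by
          constructor
          · have := hu.1; rw [hcdef] at this; linarith [min_le_left δ r]
          · linarith [hu.2]
        have hxb : x ∈ Ioo (x - δ) (x + δ) := ⟨by linarith, by linarith⟩
        have := hanti hub hxb hu.2
        rwa [hd1h0] at this
      have hmono2 : StrictMonoOn h (Icc c x) := by
        apply strictMonoOn_of_deriv_pos (convex_Icc c x)
        · exact fun u hu => ((hhan u (hcI hu)).continuousAt).continuousWithinAt
        · intro u hu
          rw [interior_Icc] at hu
          exact hpos u hu
      have h1 := hmono2 ⟨le_refl c, hcx.le⟩ ⟨hcx.le, le_refl x⟩ hcx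
      rw [hh0] at h1
      have h2 := h_left c ⟨by rw [hcdef]; linarith [min_le_right δ r], hcx⟩
      have : h c = a c - b c := rfl
      linarith [this ▸ h1]
    · exact he
    · exfalso
      obtain ⟨δ, hδ, hbs, hmono⟩ := my_strictMonoOn_ball hIopen hhan.deriv hxI hgt
      have hm : 0 < min δ r := lt_min hδ hr
      set c := x + min δ r / 2 with hcdef
      have hcx : x < c := by rw [hcdef]; linarith
      have hcI : Icc x c ⊆ I := fun u hu =>
        ⟨by linarith [hu.1], by simp only [hcdef] at hu; linarith [hu.2, min_le_right δ r]⟩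
      have hpos : ∀ u ∈ Ioo x c, 0 < deriv h u := by
        intro u hu
        have hub : u ∈ Ioo (x - δ) (x + δ) := by
          constructor
          · linarith [hu.1]
          · have := hu.2; rw [hcdef] at this; linarith [min_le_left δ r]
        have hxb : x ∈ Ioo (x - δ) (x + δ) := ⟨by linarith, by linarith⟩
        have := hmono hxb hub hu.1
        rwa [hd1h0] at this
      have hmono2 : StrictMonoOn h (Icc x c) := by
        apply strictMonoOn_of_deriv_pos (convex_Icc x c)
        · exact fun u hu => ((hhan u (hcI hu)).continuousAt).continuousWithinAt
        · intro u hu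
          rw [interior_Icc] at hu
          exact hpos u hu
      have h1 := hmono2 ⟨le_refl x, hcx.le⟩ ⟨hcx.le, le_refl c⟩ hcx
      rw [hh0] at h1
      have h2 := h_right c ⟨hcx, by rw [hcdef]; linarith [min_le_right δ r]⟩
      have : h c = a c - b c := rfl
      linarith [this ▸ h1]
  have hderiv_eq2 : deriv (deriv b) x = deriv (deriv a) x := by
    have hev : deriv h =ᶠ[𝓝 x] fun t => deriv a t - deriv b t :=
      eventually_of_mem (hIopen.mem_nhds hxI) hd_sub
    have h1 : deriv (deriv h) x = deriv (fun t => deriv a t - deriv b t) x := hev.deriv_eq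
    have h2 : deriv (fun t => deriv a t - deriv b t) x
        = deriv (deriv a) x - deriv (deriv b) x :=
      deriv_sub ((han_a.deriv x hxI).differentiableAt) ((han_b.deriv x hxI).differentiableAt)
    rw [h1, h2] at d2
    linarith
  -- gluing
  set G : ℝ → ℝ := fun u => if u < x then b u else a u with hGdef
  set G1 : ℝ → ℝ := fun u => if u < x then deriv b u else deriv a u with hG1def
  set G2 : ℝ → ℝ := fun u => if u < x then deriv (deriv b) u else deriv (deriv a) u with hG2def
  have hb0a : b x = a x := hbx.trans hax.symm
  have hgG : ∀ t ∈ I, g t = G t := by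
    intro t ht
    by_cases hcase : t < x
    · rw [hGdef]; simp only [if_pos hcase]
      exact g_left t ⟨ht.1, hcase.le⟩
    · rw [hGdef]; simp only [if_neg hcase]
      exact g_right t ⟨not_lt.mp hcase, ht.2⟩
  have hG1' := my_glue_hasDerivAt hIopen hxI hda hdb hb0a hderiv_eq1
  have hG2' := my_glue_hasDerivAt hIopen hxI
    (fun t ht => (han_a.deriv t ht).differentiableAt)
    (fun t ht => (han_b.deriv t ht).differentiableAt) hderiv_eq1 hderiv_eq2
  have hG2cont := my_glue_continuousAt hIopen hxI
    (fun t ht => (han_a.deriv.deriv t ht).continuousAt)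
    (fun t ht => (han_b.deriv.deriv t ht).continuousAt) hderiv_eq2
  have hc : ContDiffOn ℝ 2 G I := by
    rw [show (2 : WithTop ℕ∞) = 1 + 1 from by norm_num,
      contDiffOn_succ_iff_deriv_of_isOpen hIopen]
    refine ⟨fun t ht => (hG1' t ht).differentiableAt.differentiableWithinAt, by simp, ?_⟩
    have hcg1 : ContDiffOn ℝ 1 G1 I := by
      rw [show (1 : WithTop ℕ∞) = 0 + 1 from by norm_num,
        contDiffOn_succ_iff_deriv_of_isOpen hIopen]
      refine ⟨fun t ht => (hG2' t ht).differentiableAt.differentiableWithinAt, by simp, ?_⟩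
      rw [contDiffOn_zero]
      have hcont2 : ContinuousOn G2 I := fun t ht => (hG2cont t ht).continuousWithinAt
      exact hcont2.congr (fun t ht => (hG2' t ht).deriv)
    exact hcg1.congr (fun t ht => (hG1' t ht).deriv)
  have heq1 : ∀ t ∈ I, deriv g t = G1 t := by
    intro t ht
    have hev : g =ᶠ[𝓝 t] G := eventually_of_mem (hIopen.mem_nhds ht) hgG
    rw [hev.deriv_eq]
    exact (hG1' t ht).deriv
  have heq2 : ∀ t ∈ I, deriv (deriv g) t = G2 t := by
    intro t ht
    have hev : deriv g =ᶠ[𝓝 t] G1 := eventually_of_mem (hIopen.mem_nhds ht) heq1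
    rw [hev.deriv_eq]
    exact (hG2' t ht).deriv
  -- conclusion
  refine ⟨r / 2, by linarith, ?_, ?_⟩
  · have hsub' : Ioo (x - r/2) (x + r/2) ⊆ I := fun t ht =>
      ⟨by linarith [ht.1], by linarith [ht.2]⟩
    exact (hc.congr hgG).mono hsub'
  · have hIccI : Icc (x - r/2) (x + r/2) ⊆ I := fun t ht =>
      ⟨by linarith [ht.1], by linarith [ht.2]⟩
    obtain ⟨Ca, hCa⟩ := (isCompact_Icc (a := x - r/2) (b := x + r/2)).exists_bound_of_continuousOn
      ((han_a.deriv.deriv.deriv.continuousOn).mono hIccI)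
    obtain ⟨Cb, hCb⟩ := (isCompact_Icc (a := x - r/2) (b := x + r/2)).exists_bound_of_continuousOn
      ((han_b.deriv.deriv.deriv.continuousOn).mono hIccI)
    set C := max Ca Cb with hCdef
    have lipa : LipschitzOnWith C.toNNReal (deriv (deriv a)) (Icc x (x + r/2)) := by
      apply my_lip_second han_a (fun t ht => hIccI ⟨by linarith [ht.1], ht.2⟩)
      intro t ht
      exact le_trans (hCa t ⟨by linarith [ht.1], ht.2⟩) (le_max_left Ca Cb)
    have lipb : LipschitzOnWith C.toNNReal (deriv (deriv b)) (Icc (x - r/2) x) := by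
      apply my_lip_second han_b (fun t ht => hIccI ⟨ht.1, by linarith [ht.2]⟩)
      intro t ht
      exact le_trans (hCb t ⟨ht.1, by linarith [ht.2]⟩) (le_max_right Ca Cb)
    have lipG2 : LipschitzOnWith C.toNNReal G2 (Icc (x - r/2) (x + r/2)) :=
      my_glue_lipschitz lipa lipb hderiv_eq2 (by linarith) (by linarith)
    refine ⟨C.toNNReal, ?_⟩
    have hsub' : Ioo (x - r/2) (x + r/2) ⊆ I := fun t ht =>
      ⟨by linarith [ht.1], by linarith [ht.2]⟩
    exact my_lipschitzOnWith_congr (lipG2.mono Ioo_subset_Icc_self)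
      (fun t ht => heq2 t (hsub' ht))
end
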